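/- arXiv:0705.3556 — 17 statements merged into one kernel-verified Lean document; each statement's English description precedes it below -/
import Mathlib

section
/- Let f : [a,b] → ℝ be (l,L)-Lipschitzian, i.e., l(x₂-x₁) ≤ f(x₂)-f(x₁) ≤ L(x₂-x₁) for all a ≤ x₁ ≤ x₂ ≤ b with l < L. Then for all h ∈ [0,1] and all x with a + h(b-a)/2 ≤ x ≤ b - h(b-a)/2, we have |(b-a){[f(x) - ((L+l)/2)(x - (a+b)/2)](1-h) + h(f(a)+f(b))/2} - ∫ₐᵇ f(t)dt| ≤ (1/2)[((b-a)²/4)(h² + (h-1)²) + (x - (a+b)/2)²](L - l). -/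
open intervalIntegral MeasureTheory

theorem stmt_0 (a b l L : ℝ) (f : ℝ → ℝ) (hab : a < b) (hlL : l < L)
    (hf : ∀ x₁ x₂, a ≤ x₁ → x₁ ≤ x₂ → x₂ ≤ b →
      l * (x₂ - x₁) ≤ f x₂ - f x₁ ∧ f x₂ - f x₁ ≤ L * (x₂ - x₁))
    (hint : IntervalIntegrable f MeasureTheory.volume a b)
    (h x : ℝ) (hh : h ∈ Set.Icc (0:ℝ) 1)
    (hx1 : a + h * (b - a) / 2 ≤ x) (hx2 : x ≤ b - h * (b - a) / 2) :
    |(b - a) * ((f x - (L + l) / 2 * (x - (a + b) / 2)) * (1 - h)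
        + h * (f a + f b) / 2) - ∫ t in a..b, f t| ≤
      1 / 2 * ((b - a) ^ 2 / 4 * (h ^ 2 + (h - 1) ^ 2) + (x - (a + b) / 2) ^ 2) * (L - l) := by
  obtain ⟨hh0, hh1⟩ := hh
  have hba : (0:ℝ) < b - a := by linarith
  set c : ℝ := (L + l) / 2 with hc
  set K : ℝ := (L - l) / 2 with hKdef
  set g : ℝ → ℝ := fun t => f t - c * (t - (a + b) / 2) with hg
  set α : ℝ := a + h * (b - a) / 2 with hα
  set β : ℝ := b - h * (b - a) / 2 with hβ
  have haα : a ≤ α := by rw [hα]; nlinarith [mul_nonneg hh0 hba.le]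
  have hβb : β ≤ b := by rw [hβ]; nlinarith [mul_nonneg hh0 hba.le]
  have hαb : α ≤ b := le_trans (le_trans hx1 hx2) hβb
  have haβ : a ≤ β := le_trans haα (le_trans hx1 hx2)
  have hax : a ≤ x := le_trans haα hx1
  have hxb : x ≤ b := le_trans hx2 hβb
  have hK0 : (0:ℝ) ≤ K := by simp [hKdef]; linarith
  -- Lipschitz-type bound for g
  have hlip : ∀ s t : ℝ, a ≤ s → s ≤ b → a ≤ t → t ≤ b → |g s - g t| ≤ K * |s - t| := by
    intro s t hs1 hs2 ht1 ht2
    rcases le_total t s with hts | hst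
    · obtain ⟨h1, h2⟩ := hf t s ht1 hts hs2
      rw [abs_of_nonneg (by linarith : (0:ℝ) ≤ s - t), abs_le]
      constructor <;> simp only [hg, hc, hKdef] <;> nlinarith
    · obtain ⟨h1, h2⟩ := hf s t hs1 hst ht2
      rw [abs_of_nonpos (by linarith : s - t ≤ 0), abs_le]
      constructor <;> simp only [hg, hc, hKdef] <;> nlinarith
  have hgint : IntervalIntegrable g volume a b := by
    apply hint.sub
    exact ((continuous_const.mul (continuous_id.sub continuous_const)).intervalIntegrable a b)
  have hsub : ∀ p q : ℝ, a ≤ p → p ≤ b → a ≤ q → q ≤ b → IntervalIntegrable g volume p q := by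
    intro p q hp1 hp2 hq1 hq2
    apply hgint.mono_set
    apply Set.uIcc_subset_uIcc <;> rw [Set.uIcc_of_le hab.le] <;> exact ⟨by assumption, by assumption⟩
  -- generic bound
  have bound : ∀ p q r : ℝ, a ≤ p → p ≤ q → q ≤ b → a ≤ r → r ≤ b →
      |∫ t in p..q, (g r - g t)| ≤ ∫ t in p..q, K * |r - t| := by
    intro p q r hp hpq hq hr1 hr2
    have hiq : IntervalIntegrable (fun t => g r - g t) volume p q :=
      intervalIntegrable_const.sub (hsub p q hp (hpq.trans hq) (hp.trans hpq) hq)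
    calc |∫ t in p..q, (g r - g t)| ≤ ∫ t in p..q, |g r - g t| :=
          intervalIntegral.abs_integral_le_integral_abs hpq
      _ ≤ ∫ t in p..q, K * |r - t| := by
          apply intervalIntegral.integral_mono_on hpq hiq.abs
            ((continuous_const.mul ((continuous_const.sub continuous_id).abs)).intervalIntegrable p q)
          intro t ht
          exact hlip r t hr1 hr2 (le_trans hp ht.1) (le_trans ht.2 hq)
  have quad : ∀ p q r : ℝ, (∫ t in p..q, (t - r)) = ((q - r) ^ 2 - (p - r) ^ 2) / 2 := by
    intro p q r
    rw [intervalIntegral.integral_comp_sub_right (fun t => t) r, integral_id]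
    try ring
  have calc_right : ∀ p q : ℝ, p ≤ q → (∫ t in p..q, K * |p - t|) = K * (q - p) ^ 2 / 2 := by
    intro p q hpq
    rw [intervalIntegral.integral_const_mul]
    have : (∫ t in p..q, |p - t|) = ∫ t in p..q, (t - p) := by
      apply intervalIntegral.integral_congr
      intro t ht
      rw [Set.uIcc_of_le hpq] at ht
      show |p - t| = t - p
      rw [abs_of_nonpos (by linarith [ht.1] : p - t ≤ 0)]; ring
    rw [this, quad]; ring
  have calc_left : ∀ p q : ℝ, p ≤ q → (∫ t in p..q, K * |q - t|) = K * (q - p) ^ 2 / 2 := by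
    intro p q hpq
    rw [intervalIntegral.integral_const_mul]
    have : (∫ t in p..q, |q - t|) = ∫ t in p..q, (q - t) := by
      apply intervalIntegral.integral_congr
      intro t ht
      rw [Set.uIcc_of_le hpq] at ht
      show |q - t| = q - t
      rw [abs_of_nonneg (by linarith [ht.2] : (0:ℝ) ≤ q - t)]
    have h2 : (∫ t in p..q, (q - t)) = -∫ t in p..q, (t - q) := by
      rw [← intervalIntegral.integral_neg]; congr 1; funext t; ring
    rw [this, h2, quad]; ring
  -- the four bounds
  have B1 : |∫ t in a..α, (g a - g t)| ≤ K * (α - a) ^ 2 / 2 := by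
    calc |∫ t in a..α, (g a - g t)| ≤ ∫ t in a..α, K * |a - t| :=
          bound a α a le_rfl haα hαb le_rfl hab.le
      _ = K * (α - a) ^ 2 / 2 := calc_right a α haα
  have B2 : |∫ t in α..x, (g x - g t)| ≤ K * (x - α) ^ 2 / 2 := by
    calc |∫ t in α..x, (g x - g t)| ≤ ∫ t in α..x, K * |x - t| :=
          bound α x x haα hx1 hxb hax hxb
      _ = K * (x - α) ^ 2 / 2 := calc_left α x hx1
  have B3 : |∫ t in x..β, (g x - g t)| ≤ K * (β - x) ^ 2 / 2 := by
    calc |∫ t in x..β, (g x - g t)| ≤ ∫ t in x..β, K * |x - t| :=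
          bound x β x hax hx2 hβb hax hxb
      _ = K * (β - x) ^ 2 / 2 := calc_right x β hx2
  have B4 : |∫ t in β..b, (g b - g t)| ≤ K * (b - β) ^ 2 / 2 := by
    calc |∫ t in β..b, (g b - g t)| ≤ ∫ t in β..b, K * |b - t| :=
          bound β b b haβ hβb le_rfl hab.le le_rfl
      _ = K * (b - β) ^ 2 / 2 := calc_left β b hβb
  -- splitting the integral
  have i1 : IntervalIntegrable g volume a α := hsub a α le_rfl hab.le haα hαb
  have i2 : IntervalIntegrable g volume α x := hsub α x haα hαb hax hxb
  have i3 : IntervalIntegrable g volume x β := hsub x β hax hxb haβ hβb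
  have i4 : IntervalIntegrable g volume β b := hsub β b haβ hβb hab.le le_rfl
  have s1 := intervalIntegral.integral_add_adjacent_intervals i1 i2
  have s2 := intervalIntegral.integral_add_adjacent_intervals (i1.trans i2) i3
  have s3 := intervalIntegral.integral_add_adjacent_intervals ((i1.trans i2).trans i3) i4
  have split : (∫ t in a..b, g t) = (∫ t in a..α, g t) + (∫ t in α..x, g t)
      + (∫ t in x..β, g t) + (∫ t in β..b, g t) := by
    rw [← s3, ← s2, ← s1]
  -- evaluate integrals of constants minus g
  have econst : ∀ p q C : ℝ, a ≤ p → p ≤ b → a ≤ q → q ≤ b →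
      (∫ t in p..q, (C - g t)) = (q - p) * C - ∫ t in p..q, g t := by
    intro p q C hp1 hp2 hq1 hq2
    rw [intervalIntegral.integral_sub intervalIntegrable_const (hsub p q hp1 hp2 hq1 hq2),
      intervalIntegral.integral_const, smul_eq_mul]
  have e1 := econst a α (g a) le_rfl hab.le haα hαb
  have e2 := econst α x (g x) haα hαb hax hxb
  have e3 := econst x β (g x) hax hxb haβ hβb
  have e4 := econst β b (g b) haβ hβb hab.le le_rfl
  -- ∫ g = ∫ f
  have hfg : (∫ t in a..b, g t) = ∫ t in a..b, f t := by
    have hcint : IntervalIntegrable (fun t => c * (t - (a + b) / 2)) volume a b :=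
      (continuous_const.mul (continuous_id.sub continuous_const)).intervalIntegrable a b
    have : (∫ t in a..b, g t) = (∫ t in a..b, f t) - ∫ t in a..b, c * (t - (a + b) / 2) := by
      simp only [hg]
      exact intervalIntegral.integral_sub hint hcint
    rw [this, intervalIntegral.integral_const_mul, quad a b ((a + b) / 2)]
    ring
  -- main identity
  have main_eq : (b - a) * ((f x - c * (x - (a + b) / 2)) * (1 - h) + h * (f a + f b) / 2)
      - (∫ t in a..b, f t)
      = (∫ t in a..α, (g a - g t)) + (∫ t in α..x, (g x - g t))
        + (∫ t in x..β, (g x - g t)) + (∫ t in β..b, (g b - g t)) := by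
    rw [e1, e2, e3, e4, ← hfg, split]
    simp only [hg, hα, hβ, hc]
    ring
  rw [main_eq]
  have tri : |(∫ t in a..α, (g a - g t)) + (∫ t in α..x, (g x - g t))
        + (∫ t in x..β, (g x - g t)) + (∫ t in β..b, (g b - g t))|
      ≤ K * (α - a) ^ 2 / 2 + K * (x - α) ^ 2 / 2 + K * (β - x) ^ 2 / 2 + K * (b - β) ^ 2 / 2 := by
    calc _ ≤ |(∫ t in a..α, (g a - g t)) + (∫ t in α..x, (g x - g t))
            + (∫ t in x..β, (g x - g t))| + |∫ t in β..b, (g b - g t)| := abs_add_le _ _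
      _ ≤ |(∫ t in a..α, (g a - g t)) + (∫ t in α..x, (g x - g t))|
            + |∫ t in x..β, (g x - g t)| + |∫ t in β..b, (g b - g t)| := by
          have := abs_add_le ((∫ t in a..α, (g a - g t)) + (∫ t in α..x, (g x - g t)))
            (∫ t in x..β, (g x - g t))
          linarith
      _ ≤ _ := by
          have := abs_add_le (∫ t in a..α, (g a - g t)) (∫ t in α..x, (g x - g t))
          linarith
  refine le_trans tri (le_of_eq ?_)
  simp only [hα, hβ, hKdef]
  ring
end

section
/- Let f : [a,b] → ℝ be (l,L)-Lipschitzian and S = (f(b)-f(a))/(b-a). Then for all h ∈ [0,1] and all x with a + h(b-a)/2 ≤ x ≤ b - h(b-a)/2, we have |(b-a){[f(x) - l(x - (a+b)/2)](1-h) + h(f(a)+f(b))/2} - ∫ₐᵇ f(t)dt| ≤ (b-a) · max{h(b-a)/2, x - a - h(b-a)/2, b - x - h(b-a)/2} · (S - l). -/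
/-!
Subtracting the lower slope, `g t = f t - l * t` is nondecreasing on `[a, b]`, and the quantity
to bound is `(p - a) g(a) + (q - p) g(x) + (b - q) g(b) - ∫ₐᵇ g` with `p = a + h(b-a)/2`,
`q = b - h(b-a)/2`.  On each of the four intervals cut out by `a ≤ p ≤ x ≤ q ≤ b`, the integral of
a monotone function lies between length times the endpoint values, so the error is at most
`max (lengths) * (increments of g)`, and the increments add up to at most `g b - g a`,
which is `(b - a) (S - l)`.
-/

open MeasureTheory intervalIntegral Set

namespace MonotoneOn

variable {g : ℝ → ℝ} {a b : ℝ}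

theorem intervalIntegrable_of_Icc (hg : MonotoneOn g (Icc a b)) {c d : ℝ}
    (hac : a ≤ c) (hcd : c ≤ d) (hdb : d ≤ b) : IntervalIntegrable g volume c d :=
  MonotoneOn.intervalIntegrable (hg.mono <| by
    rw [uIcc_of_le hcd]; exact Icc_subset_Icc hac hdb)

theorem integral_mem_Icc (hg : MonotoneOn g (Icc a b)) (hab : a ≤ b) :
    ∫ t in a..b, g t ∈ Icc ((b - a) * g a) ((b - a) * g b) := by
  have hint := hg.intervalIntegrable_of_Icc le_rfl hab le_rfl
  have ha : a ∈ Icc a b := ⟨le_rfl, hab⟩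
  have hb : b ∈ Icc a b := ⟨hab, le_rfl⟩
  constructor
  · simpa using integral_mono_on hab intervalIntegrable_const hint fun t ht => hg ha ht ht.1
  · simpa using integral_mono_on hab hint intervalIntegrable_const fun t ht => hg ht hb ht.2

theorem abs_three_point_sub_integral_le (hg : MonotoneOn g (Icc a b)) {p x q M : ℝ}
    (hap : a ≤ p) (hpx : p ≤ x) (hxq : x ≤ q) (hqb : q ≤ b)
    (hpa : p - a ≤ M) (hxp : x - p ≤ M) (hqx : q - x ≤ M) (hbq : b - q ≤ M) :
    |(p - a) * g a + (q - p) * g x + (b - q) * g b - ∫ t in a..b, g t| ≤ M * (g b - g a) := by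
  have hax := hap.trans hpx
  have hxb := hxq.trans hqb
  have hmono : ∀ {c d}, a ≤ c → c ≤ d → d ≤ b → g c ≤ g d := fun hac hcd hdb =>
    hg ⟨hac, hcd.trans hdb⟩ ⟨hac.trans hcd, hdb⟩ hcd
  have hsub : ∀ {c d}, a ≤ c → c ≤ d → d ≤ b → MonotoneOn g (Icc c d) := fun hac _ hdb =>
    hg.mono (Icc_subset_Icc hac hdb)
  have hsplit : ∫ t in a..b, g t = (∫ t in a..p, g t) + (∫ t in p..x, g t)
      + (∫ t in x..q, g t) + ∫ t in q..b, g t := by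
    have hint := @hg.intervalIntegrable_of_Icc
    rw [integral_add_adjacent_intervals (hint le_rfl hap (hpx.trans hxb))
        (hint hap hpx hxb), integral_add_adjacent_intervals (hint le_rfl hax hxb)
        (hint hax hxq hqb), integral_add_adjacent_intervals (hint le_rfl (hax.trans hxq) hqb)
        (hint (hax.trans hxq) hqb le_rfl)]
  obtain ⟨h₁, h₁'⟩ := (hsub le_rfl hap (hpx.trans hxb)).integral_mem_Icc hap
  obtain ⟨h₂, h₂'⟩ := (hsub hap hpx hxb).integral_mem_Icc hpx
  obtain ⟨h₃, h₃'⟩ := (hsub hax hxq hqb).integral_mem_Icc hxq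
  obtain ⟨h₄, h₄'⟩ := (hsub (hax.trans hxq) hqb le_rfl).integral_mem_Icc hqb
  have hgap := hmono le_rfl hap (hpx.trans hxb)
  have hgpx := hmono hap hpx hxb
  have hgxq := hmono hax hxq hqb
  have hgqb := hmono (hax.trans hxq) hqb le_rfl
  have e₁ := mul_le_mul_of_nonneg_right hpa (sub_nonneg.2 hgap)
  have e₂ := mul_le_mul_of_nonneg_right hxp (sub_nonneg.2 hgpx)
  have e₃ := mul_le_mul_of_nonneg_right hqx (sub_nonneg.2 hgxq)
  have e₄ := mul_le_mul_of_nonneg_right hbq (sub_nonneg.2 hgqb)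
  rw [hsplit, abs_le]
  constructor <;> linarith

end MonotoneOn

theorem stmt_1_general (a b l L : ℝ) (f : ℝ → ℝ) (hab : a < b)
    (hf : ∀ x₁ x₂, a ≤ x₁ → x₁ ≤ x₂ → x₂ ≤ b →
      l * (x₂ - x₁) ≤ f x₂ - f x₁ ∧ f x₂ - f x₁ ≤ L * (x₂ - x₁))
    (S : ℝ) (hS : S = (f b - f a) / (b - a))
    (h x : ℝ) (hh : h ∈ Set.Icc (0:ℝ) 1)
    (hx1 : a + h * (b - a) / 2 ≤ x) (hx2 : x ≤ b - h * (b - a) / 2) :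
    |(b - a) * ((f x - l * (x - (a + b) / 2)) * (1 - h)
        + h * (f a + f b) / 2) - ∫ t in a..b, f t| ≤
      (b - a) * max (h * (b - a) / 2) (max (x - a - h * (b - a) / 2) (b - x - h * (b - a) / 2))
        * (S - l) := by
  set g : ℝ → ℝ := fun t => f t - l * t
  have hg : MonotoneOn g (Icc a b) := fun x₁ hx₁ x₂ hx₂ hle => by
    have := (hf x₁ x₂ hx₁.1 hle hx₂.2).1
    simp only [g]
    linarith
  have hf_int : ∫ t in a..b, f t = (∫ t in a..b, g t) + l * ((b ^ 2 - a ^ 2) / 2) := by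
    rw [← integral_id, ← intervalIntegral.integral_const_mul,
      ← intervalIntegral.integral_add (hg.intervalIntegrable_of_Icc le_rfl hab.le le_rfl)
        ((continuous_const_mul l).intervalIntegrable a b)]
    simp only [g, sub_add_cancel]
  have hbound := hg.abs_three_point_sub_integral_le (p := a + h * (b - a) / 2) (x := x)
    (q := b - h * (b - a) / 2)
    (M := max (h * (b - a) / 2) (max (x - a - h * (b - a) / 2) (b - x - h * (b - a) / 2)))
    (by nlinarith [hh.1]) hx1 hx2 (by nlinarith [hh.1])
    (le_max_of_le_left (by linarith)) (le_max_of_le_right (le_max_of_le_left (by linarith)))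
    (le_max_of_le_right (le_max_of_le_right (by linarith))) (le_max_of_le_left (by linarith))
  refine le_of_eq_of_le ?_ (hbound.trans_eq ?_)
  · simp only [g, hf_int]
    ring_nf
  · rw [hS]
    field_simp [(sub_pos.2 hab).ne']
    ring

theorem stmt_1 (a b l L : ℝ) (f : ℝ → ℝ) (hab : a < b) (hlL : l < L)
    (hf : ∀ x₁ x₂, a ≤ x₁ → x₁ ≤ x₂ → x₂ ≤ b →
      l * (x₂ - x₁) ≤ f x₂ - f x₁ ∧ f x₂ - f x₁ ≤ L * (x₂ - x₁))
    (hint : IntervalIntegrable f MeasureTheory.volume a b)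
    (S : ℝ) (hS : S = (f b - f a) / (b - a))
    (h x : ℝ) (hh : h ∈ Set.Icc (0:ℝ) 1)
    (hx1 : a + h * (b - a) / 2 ≤ x) (hx2 : x ≤ b - h * (b - a) / 2) :
    |(b - a) * ((f x - l * (x - (a + b) / 2)) * (1 - h)
        + h * (f a + f b) / 2) - ∫ t in a..b, f t| ≤
      (b - a) * max (h * (b - a) / 2) (max (x - a - h * (b - a) / 2) (b - x - h * (b - a) / 2))
        * (S - l) :=
  stmt_1_general a b l L f hab hf S hS h x hh hx1 hx2
end

section
/- Let f : [a,b] → ℝ be (l,L)-Lipschitzian and S = (f(b)-f(a))/(b-a). Then for all h ∈ [0,1] and all x with a + h(b-a)/2 ≤ x ≤ b - h(b-a)/2, we have |(b-a){[f(x) - L(x - (a+b)/2)](1-h) + h(f(a)+f(b))/2} - ∫ₐᵇ f(t)dt| ≤ (b-a) · max{h(b-a)/2, x - a - h(b-a)/2, b - x - h(b-a)/2} · (L - S). -/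
set_option maxHeartbeats 1000000

theorem stmt_2 (a b l L : ℝ) (f : ℝ → ℝ) (hab : a < b) (hlL : l < L)
    (hf : ∀ x₁ x₂, a ≤ x₁ → x₁ ≤ x₂ → x₂ ≤ b →
      l * (x₂ - x₁) ≤ f x₂ - f x₁ ∧ f x₂ - f x₁ ≤ L * (x₂ - x₁))
    (hint : IntervalIntegrable f MeasureTheory.volume a b)
    (S : ℝ) (hS : S = (f b - f a) / (b - a))
    (h x : ℝ) (hh : h ∈ Set.Icc (0:ℝ) 1)
    (hx1 : a + h * (b - a) / 2 ≤ x) (hx2 : x ≤ b - h * (b - a) / 2) :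
    |(b - a) * ((f x - L * (x - (a + b) / 2)) * (1 - h)
        + h * (f a + f b) / 2) - ∫ t in a..b, f t| ≤
      (b - a) * max (h * (b - a) / 2) (max (x - a - h * (b - a) / 2) (b - x - h * (b - a) / 2))
        * (L - S) := by
  obtain ⟨hh0, hh1⟩ := hh
  set g : ℝ → ℝ := fun t => L * t - f t with hg_def
  have hmono : ∀ s t, a ≤ s → s ≤ t → t ≤ b → g s ≤ g t := by
    intro s t hs hst htb
    have := (hf s t hs hst htb).2
    simp only [hg_def]
    nlinarith
  set c := a + h * (b - a) / 2 with hc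
  set d := b - h * (b - a) / 2 with hd
  have hac : a ≤ c := by simp only [hc]; nlinarith
  have hcx : c ≤ x := hx1
  have hxd : x ≤ d := hx2
  have hdb : d ≤ b := by simp only [hd]; nlinarith
  have hcb : c ≤ b := le_trans (le_trans hcx hxd) hdb
  have had : a ≤ d := le_trans hac (le_trans hcx hxd)
  have hax : a ≤ x := le_trans hac hcx
  have hxb : x ≤ b := le_trans hxd hdb
  have hgi : ∀ p q, a ≤ p → p ≤ b → a ≤ q → q ≤ b →
      IntervalIntegrable g MeasureTheory.volume p q := by
    intro p q hp1 hp2 hq1 hq2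
    apply IntervalIntegrable.sub
    · exact (continuous_const.mul continuous_id).intervalIntegrable p q
    · apply hint.mono_set
      apply Set.uIcc_subset_uIcc <;> rw [Set.uIcc_of_le hab.le] <;>
        exact ⟨by assumption, by assumption⟩
  have hub : ∀ p q, a ≤ p → p ≤ q → q ≤ b → (∫ t in p..q, g t) ≤ (q - p) * g q := by
    intro p q hp hpq hq
    have h1 : (∫ t in p..q, g t) ≤ ∫ _t in p..q, g q := by
      apply intervalIntegral.integral_mono_on hpq
        (hgi p q hp (le_trans hpq hq) (le_trans hp hpq) hq) intervalIntegrable_const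
      intro t ht
      exact hmono t q (le_trans hp ht.1) ht.2 hq
    simp only [intervalIntegral.integral_const, smul_eq_mul] at h1
    exact h1
  have hlb : ∀ p q, a ≤ p → p ≤ q → q ≤ b → (q - p) * g p ≤ ∫ t in p..q, g t := by
    intro p q hp hpq hq
    have h1 : (∫ _t in p..q, g p) ≤ ∫ t in p..q, g t := by
      apply intervalIntegral.integral_mono_on hpq intervalIntegrable_const
        (hgi p q hp (le_trans hpq hq) (le_trans hp hpq) hq)
      intro t ht
      exact hmono p t hp ht.1 (le_trans ht.2 hq)
    simp only [intervalIntegral.integral_const, smul_eq_mul] at h1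
    exact h1
  set I1 := ∫ t in a..c, g t with hI1
  set I2 := ∫ t in c..x, g t with hI2
  set I3 := ∫ t in x..d, g t with hI3
  set I4 := ∫ t in d..b, g t with hI4
  have hsplit : (∫ t in a..b, g t) = I1 + I2 + I3 + I4 := by
    rw [hI1, hI2, hI3, hI4]
    rw [intervalIntegral.integral_add_adjacent_intervals
      (hgi a c le_rfl hab.le hac hcb) (hgi c x hac hcb hax hxb),
      intervalIntegral.integral_add_adjacent_intervals
      (hgi a x le_rfl hab.le hax hxb) (hgi x d hax hxb had hdb),
      intervalIntegral.integral_add_adjacent_intervals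
      (hgi a d le_rfl hab.le had hdb) (hgi d b had hdb hab.le le_rfl)]
  have hgint : (∫ t in a..b, g t) = L * ((b ^ 2 - a ^ 2) / 2) - ∫ t in a..b, f t := by
    have : (∫ t in a..b, g t) = (∫ t in a..b, L * t) - ∫ t in a..b, f t := by
      simp only [hg_def]
      exact intervalIntegral.integral_sub
        ((continuous_const.mul continuous_id).intervalIntegrable a b) hint
    rw [this, intervalIntegral.integral_const_mul, integral_id]
  have hintf : (∫ t in a..b, f t) = L * ((b ^ 2 - a ^ 2) / 2) - (I1 + I2 + I3 + I4) := by
    rw [← hsplit, hgint]; ring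
  have hb1 : (c - a) * g a ≤ I1 := hlb a c le_rfl hac hcb
  have hb2 : I1 ≤ (c - a) * g c := hub a c le_rfl hac hcb
  have hb3 : (x - c) * g c ≤ I2 := hlb c x hac hcx hxb
  have hb4 : I2 ≤ (x - c) * g x := hub c x hac hcx hxb
  have hb5 : (d - x) * g x ≤ I3 := hlb x d hax hxd hdb
  have hb6 : I3 ≤ (d - x) * g d := hub x d hax hxd hdb
  have hb7 : (b - d) * g d ≤ I4 := hlb d b had hdb le_rfl
  have hb8 : I4 ≤ (b - d) * g b := hub d b had hdb le_rfl
  have hm1 : g a ≤ g c := hmono a c le_rfl hac hcb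
  have hm2 : g c ≤ g x := hmono c x hac hcx hxb
  have hm3 : g x ≤ g d := hmono x d hax hxd hdb
  have hm4 : g d ≤ g b := hmono d b had hdb le_rfl
  set M := max (h * (b - a) / 2) (max (x - a - h * (b - a) / 2) (b - x - h * (b - a) / 2))
    with hM
  have hM1 : c - a ≤ M := by
    have : h * (b - a) / 2 ≤ M := le_max_left _ _
    simp only [hc]; linarith
  have hM2 : b - d ≤ M := by
    have : h * (b - a) / 2 ≤ M := le_max_left _ _
    simp only [hd]; linarith
  have hM3 : x - c ≤ M := by
    have : x - a - h * (b - a) / 2 ≤ M := le_trans (le_max_left _ _) (le_max_right _ _)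
    simp only [hc]; linarith
  have hM4 : d - x ≤ M := by
    have : b - x - h * (b - a) / 2 ≤ M := le_trans (le_max_right _ _) (le_max_right _ _)
    simp only [hd]; linarith
  have hM0 : 0 ≤ M := le_trans (by linarith) hM1
  have hfx : f x = L * x - g x := by simp [hg_def]
  have hfa : f a = L * a - g a := by simp [hg_def]
  have hfb : f b = L * b - g b := by simp [hg_def]
  have hRHS : (b - a) * M * (L - S) = M * (g b - g a) := by
    rw [hS, hfb, hfa]
    have hne : b - a ≠ 0 := ne_of_gt (sub_pos.mpr hab)
    field_simp
    ring
  rw [hintf, hfx, hfa, hfb, hRHS]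
  have hkey : (b - a) * ((L * x - g x - L * (x - (a + b) / 2)) * (1 - h)
        + h * (L * a - g a + (L * b - g b)) / 2)
        - (L * ((b ^ 2 - a ^ 2) / 2) - (I1 + I2 + I3 + I4))
      = (I1 + I2 + I3 + I4) - ((c - a) * g a + (d - c) * g x + (b - d) * g b) := by
    have hceq : c = a + h * (b - a) / 2 := hc
    have hdeq : d = b - h * (b - a) / 2 := hd
    rw [hceq, hdeq]; ring
  rw [hkey, abs_le]
  constructor
  · linarith [hb1, hb3, hb5, hb7,
      mul_le_mul_of_nonneg_right hM3 (sub_nonneg.mpr hm2),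
      mul_le_mul_of_nonneg_right hM2 (sub_nonneg.mpr hm4),
      mul_nonneg hM0 (sub_nonneg.mpr hm1),
      mul_nonneg hM0 (sub_nonneg.mpr hm3)]
  · linarith [hb2, hb4, hb6, hb8,
      mul_le_mul_of_nonneg_right hM1 (sub_nonneg.mpr hm1),
      mul_le_mul_of_nonneg_right hM4 (sub_nonneg.mpr hm3),
      mul_nonneg hM0 (sub_nonneg.mpr hm2),
      mul_nonneg hM0 (sub_nonneg.mpr hm4)]
end

section
/- Let f : [a,b] → ℝ be (l,L)-Lipschitzian. Then for all x ∈ [a,b], |(b-a)[f(x) - ((L+l)/2)(x - (a+b)/2)] - ∫ₐᵇ f(t)dt| ≤ (1/2)[(b-a)²/4 + (x - (a+b)/2)²](L - l). -/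
theorem stmt_3 (a b l L : ℝ) (f : ℝ → ℝ) (hab : a < b) (hlL : l < L)
    (hf : ∀ x₁ x₂, a ≤ x₁ → x₁ ≤ x₂ → x₂ ≤ b →
      l * (x₂ - x₁) ≤ f x₂ - f x₁ ∧ f x₂ - f x₁ ≤ L * (x₂ - x₁))
    (hint : IntervalIntegrable f MeasureTheory.volume a b)
    (x : ℝ) (hx : x ∈ Set.Icc a b) :
    |(b - a) * (f x - (L + l) / 2 * (x - (a + b) / 2)) - ∫ t in a..b, f t| ≤
      1 / 2 * ((b - a) ^ 2 / 4 + (x - (a + b) / 2) ^ 2) * (L - l) := by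
  obtain ⟨hax, hxb⟩ := hx
  set c : ℝ := (L + l) / 2 with hc
  set M : ℝ := (L - l) / 2 with hM
  set h : ℝ → ℝ := fun t => f x - f t - c * (x - t) with hh
  have hcont : Continuous (fun t : ℝ => c * (x - t)) := by continuity
  have hih : IntervalIntegrable h MeasureTheory.volume a b :=
    (intervalIntegrable_const.sub hint).sub (hcont.intervalIntegrable a b)
  have habs : IntervalIntegrable (fun t => |x - t|) MeasureTheory.volume a b :=
    (continuous_abs.comp (by continuity)).intervalIntegrable a b
  -- pointwise bound
  have hpt : ∀ t ∈ Set.Icc a b, |h t| ≤ M * |x - t| := by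
    intro t ht
    obtain ⟨hat, htb⟩ := ht
    simp only [hh]
    rcases le_total t x with h1 | h1
    · have := hf t x hat h1 hxb
      rw [abs_of_nonneg (by linarith : (0:ℝ) ≤ x - t), abs_le]
      constructor <;> [nlinarith [this.2]; nlinarith [this.1]]
    · have := hf x t hax h1 htb
      rw [abs_of_nonpos (by linarith : x - t ≤ 0), abs_le]
      constructor <;> [nlinarith [this.2]; nlinarith [this.1]]
  -- the integral identity
  have hid : ∫ t in a..b, h t = (b - a) * (f x - c * (x - (a + b) / 2)) - ∫ t in a..b, f t := by
    simp only [hh]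
    rw [intervalIntegral.integral_sub (intervalIntegrable_const.sub hint)
        (hcont.intervalIntegrable a b),
      intervalIntegral.integral_sub intervalIntegrable_const hint,
      intervalIntegral.integral_const_mul,
      intervalIntegral.integral_const,
      intervalIntegral.integral_sub intervalIntegrable_const intervalIntegral.intervalIntegrable_id,
      intervalIntegral.integral_const, integral_id]
    simp only [smul_eq_mul]
    ring
  -- compute ∫ |x - t|
  have hi1 : IntervalIntegrable (fun t => |x - t|) MeasureTheory.volume a x :=
    (continuous_abs.comp (by continuity)).intervalIntegrable a x
  have hi2 : IntervalIntegrable (fun t => |x - t|) MeasureTheory.volume x b :=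
    (continuous_abs.comp (by continuity)).intervalIntegrable x b
  have key : (∫ t in a..b, |x - t|) = (x - a) ^ 2 / 2 + (b - x) ^ 2 / 2 := by
    rw [← intervalIntegral.integral_add_adjacent_intervals hi1 hi2]
    have e1 : (∫ t in a..x, |x - t|) = ∫ t in a..x, (x - t) := by
      apply intervalIntegral.integral_congr
      intro t ht
      rw [Set.uIcc_of_le hax] at ht
      show |x - t| = x - t
      exact abs_of_nonneg (by linarith [ht.2])
    have e2 : (∫ t in x..b, |x - t|) = ∫ t in x..b, (t - x) := by
      apply intervalIntegral.integral_congr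
      intro t ht
      rw [Set.uIcc_of_le hxb] at ht
      show |x - t| = t - x
      rw [abs_of_nonpos (by linarith [ht.1])]; ring
    rw [e1, e2,
      intervalIntegral.integral_sub intervalIntegrable_const intervalIntegral.intervalIntegrable_id,
      intervalIntegral.integral_sub intervalIntegral.intervalIntegrable_id intervalIntegrable_const,
      intervalIntegral.integral_const, integral_id,
      intervalIntegral.integral_const, integral_id]
    simp only [smul_eq_mul]
    ring
  -- main bound
  have hbound : |∫ t in a..b, h t| ≤ M * ((x - a) ^ 2 / 2 + (b - x) ^ 2 / 2) := by
    calc |∫ t in a..b, h t| ≤ ∫ t in a..b, |h t| :=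
          intervalIntegral.abs_integral_le_integral_abs hab.le
      _ ≤ ∫ t in a..b, M * |x - t| :=
          intervalIntegral.integral_mono_on hab.le hih.abs (habs.const_mul M) hpt
      _ = M * ((x - a) ^ 2 / 2 + (b - x) ^ 2 / 2) := by
          rw [intervalIntegral.integral_const_mul, key]
  rw [← hid]
  have heq : M * ((x - a) ^ 2 / 2 + (b - x) ^ 2 / 2)
      = 1 / 2 * ((b - a) ^ 2 / 4 + (x - (a + b) / 2) ^ 2) * (L - l) := by
    rw [hM]; ring
  linarith [hbound]
end

section
/- Let f : [a,b] → ℝ be (l,L)-Lipschitzian and S = (f(b)-f(a))/(b-a). Then for all x ∈ [a,b], |(b-a)[f(x) - l(x - (a+b)/2)] - ∫ₐᵇ f(t)dt| ≤ (b-a)[(b-a)/2 + |x - (a+b)/2|](S - l). -/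
theorem stmt_4 (a b l L : ℝ) (f : ℝ → ℝ) (hab : a < b) (hlL : l < L)
    (hf : ∀ x₁ x₂, a ≤ x₁ → x₁ ≤ x₂ → x₂ ≤ b →
      l * (x₂ - x₁) ≤ f x₂ - f x₁ ∧ f x₂ - f x₁ ≤ L * (x₂ - x₁))
    (hint : IntervalIntegrable f MeasureTheory.volume a b)
    (S : ℝ) (hS : S = (f b - f a) / (b - a))
    (x : ℝ) (hx : x ∈ Set.Icc a b) :
    |(b - a) * (f x - l * (x - (a + b) / 2)) - ∫ t in a..b, f t| ≤
      (b - a) * ((b - a) / 2 + |x - (a + b) / 2|) * (S - l) := by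
  obtain ⟨hx1, hx2⟩ := hx
  set g : ℝ → ℝ := fun t => f t - l * t with hg
  have hgint : IntervalIntegrable g MeasureTheory.volume a b :=
    hint.sub (intervalIntegral.intervalIntegrable_id.const_mul l)
  have hsub1 : Set.uIcc a x ⊆ Set.uIcc a b := by
    rw [Set.uIcc_of_le hx1, Set.uIcc_of_le hab.le]
    exact Set.Icc_subset_Icc le_rfl hx2
  have hsub2 : Set.uIcc x b ⊆ Set.uIcc a b := by
    rw [Set.uIcc_of_le hx2, Set.uIcc_of_le hab.le]
    exact Set.Icc_subset_Icc hx1 le_rfl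
  have hgint1 : IntervalIntegrable g MeasureTheory.volume a x := hgint.mono_set hsub1
  have hgint2 : IntervalIntegrable g MeasureTheory.volume x b := hgint.mono_set hsub2
  have hmono : ∀ t₁ t₂, a ≤ t₁ → t₁ ≤ t₂ → t₂ ≤ b → g t₁ ≤ g t₂ := by
    intro t₁ t₂ h1 h2 h3
    have := (hf t₁ t₂ h1 h2 h3).1
    simp only [hg]
    nlinarith
  have hlow1 : (x - a) * g a ≤ ∫ t in a..x, g t := by
    have h := intervalIntegral.integral_mono_on hx1 (intervalIntegrable_const (c := g a))
      hgint1 (fun t ht => hmono a t le_rfl ht.1 (ht.2.trans hx2))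
    rw [intervalIntegral.integral_const, smul_eq_mul] at h
    linarith
  have hup1 : (∫ t in a..x, g t) ≤ (x - a) * g x := by
    have h := intervalIntegral.integral_mono_on hx1 hgint1
      (intervalIntegrable_const (c := g x)) (fun t ht => hmono t x (ht.1) ht.2 hx2)
    rw [intervalIntegral.integral_const, smul_eq_mul] at h
    linarith
  have hlow2 : (b - x) * g x ≤ ∫ t in x..b, g t := by
    have h := intervalIntegral.integral_mono_on hx2 (intervalIntegrable_const (c := g x))
      hgint2 (fun t ht => hmono x t hx1 ht.1 ht.2)
    rw [intervalIntegral.integral_const, smul_eq_mul] at h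
    linarith
  have hup2 : (∫ t in x..b, g t) ≤ (b - x) * g b := by
    have h := intervalIntegral.integral_mono_on hx2 hgint2
      (intervalIntegrable_const (c := g b)) (fun t ht => hmono t b (hx1.trans ht.1) ht.2 le_rfl)
    rw [intervalIntegral.integral_const, smul_eq_mul] at h
    linarith
  have hsplit : (∫ t in a..x, g t) + (∫ t in x..b, g t) = ∫ t in a..b, g t :=
    intervalIntegral.integral_add_adjacent_intervals hgint1 hgint2
  have hid : (∫ t in a..b, (t : ℝ)) = (b ^ 2 - a ^ 2) / 2 := integral_id
  have hgab : (∫ t in a..b, g t) = (∫ t in a..b, f t) - l * ((b ^ 2 - a ^ 2) / 2) := by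
    rw [hg]
    rw [intervalIntegral.integral_sub hint (intervalIntegral.intervalIntegrable_id.const_mul l),
      intervalIntegral.integral_const_mul, hid]
  have hK0 : 0 ≤ g b - g a := sub_nonneg.mpr (hmono a b le_rfl hab.le le_rfl)
  have hgb : g b = f b - l * b := rfl
  have hga : g a = f a - l * a := rfl
  have hgx : g x = f x - l * x := rfl
  have hba : (b - a) ≠ 0 := ne_of_gt (by linarith)
  have hS1 : S * (b - a) = f b - f a := by rw [hS]; exact div_mul_cancel₀ _ hba
  have hSK : (b - a) * (S - l) = g b - g a := by
    rw [hgb, hga]; linear_combination hS1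
  have hgxa : g x - g a ≤ g b - g a := by linarith [hmono x b hx1 hx2 le_rfl]
  have hgxb : g a - g b ≤ g x - g b := by linarith [hmono a x le_rfl hx1 hx2]
  set A := |x - (a + b) / 2| with hA
  have habs1 : x - (a + b) / 2 ≤ A := le_abs_self _
  have habs2 : -(x - (a + b) / 2) ≤ A := neg_le_abs _
  have hA1 : x - a ≤ (b - a) / 2 + A := by linarith
  have hA2 : b - x ≤ (b - a) / 2 + A := by linarith
  have hD : (b - a) * (f x - l * (x - (a + b) / 2)) - ∫ t in a..b, f t
      = (b - a) * g x - ∫ t in a..b, g t := by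
    rw [hgab, hgx]
    ring
  have hRHS : (b - a) * ((b - a) / 2 + A) * (S - l) = ((b - a) / 2 + A) * (g b - g a) := by
    rw [← hSK]; ring
  rw [hD, hRHS, abs_le]
  clear_value g A
  refine ⟨?_, ?_⟩
  · linarith [mul_le_mul_of_nonneg_left hgxb (by linarith : (0:ℝ) ≤ b - x),
      mul_le_mul_of_nonneg_right hA2 hK0, hsplit, hup1, hup2]
  · linarith [mul_le_mul_of_nonneg_left hgxa (by linarith : (0:ℝ) ≤ x - a),
      mul_le_mul_of_nonneg_right hA1 hK0, hsplit, hlow1, hlow2]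
end

section
/- Let f : [a,b] → ℝ be (l,L)-Lipschitzian and S = (f(b)-f(a))/(b-a). Then for all x ∈ [a,b], |(b-a)[f(x) - L(x - (a+b)/2)] - ∫ₐᵇ f(t)dt| ≤ (b-a)[(b-a)/2 + |x - (a+b)/2|](L - S). -/
set_option maxHeartbeats 800000


theorem stmt_5 (a b l L : ℝ) (f : ℝ → ℝ) (hab : a < b) (hlL : l < L)
    (hf : ∀ x₁ x₂, a ≤ x₁ → x₁ ≤ x₂ → x₂ ≤ b →
      l * (x₂ - x₁) ≤ f x₂ - f x₁ ∧ f x₂ - f x₁ ≤ L * (x₂ - x₁))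
    (hint : IntervalIntegrable f MeasureTheory.volume a b)
    (S : ℝ) (hS : S = (f b - f a) / (b - a))
    (x : ℝ) (hx : x ∈ Set.Icc a b) :
    |(b - a) * (f x - L * (x - (a + b) / 2)) - ∫ t in a..b, f t| ≤
      (b - a) * ((b - a) / 2 + |x - (a + b) / 2|) * (L - S) := by
  obtain ⟨hax, hxb⟩ := hx
  set g : ℝ → ℝ := fun t => L * t - f t with hgdef
  clear_value g
  have hne : b - a ≠ 0 := sub_ne_zero.2 hab.ne'
  have hgmono : ∀ x₁ x₂, a ≤ x₁ → x₁ ≤ x₂ → x₂ ≤ b → g x₁ ≤ g x₂ := by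
    intro x₁ x₂ h1 h2 h3
    have := (hf x₁ x₂ h1 h2 h3).2
    simp only [hgdef]
    linarith
  have hLint : IntervalIntegrable (fun t : ℝ => L * t) MeasureTheory.volume a b :=
    (continuous_const.mul continuous_id).intervalIntegrable a b
  have hgint : IntervalIntegrable g MeasureTheory.volume a b := by
    rw [hgdef]; exact hLint.sub hint
  have hgint1 : IntervalIntegrable g MeasureTheory.volume a x :=
    hgint.mono_set (by
      rw [Set.uIcc_of_le hax, Set.uIcc_of_le hab.le]
      exact Set.Icc_subset_Icc le_rfl hxb)
  have hgint2 : IntervalIntegrable g MeasureTheory.volume x b :=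
    hgint.mono_set (by
      rw [Set.uIcc_of_le hxb, Set.uIcc_of_le hab.le]
      exact Set.Icc_subset_Icc hax le_rfl)
  have hsplit : ∫ t in a..b, g t = (∫ t in a..x, g t) + ∫ t in x..b, g t :=
    (intervalIntegral.integral_add_adjacent_intervals hgint1 hgint2).symm
  have h1u : (∫ t in a..x, g t) ≤ (x - a) * g x := by
    have h := intervalIntegral.integral_mono_on hax hgint1 intervalIntegrable_const
      (fun t ht => hgmono t x ht.1 ht.2 hxb)
    simp only [intervalIntegral.integral_const, smul_eq_mul] at h
    linarith
  have h1l : (x - a) * g a ≤ ∫ t in a..x, g t := by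
    have h := intervalIntegral.integral_mono_on hax intervalIntegrable_const hgint1
      (fun t ht => hgmono a t le_rfl ht.1 (ht.2.trans hxb))
    simp only [intervalIntegral.integral_const, smul_eq_mul] at h
    linarith
  have h2u : (∫ t in x..b, g t) ≤ (b - x) * g b := by
    have h := intervalIntegral.integral_mono_on hxb hgint2 intervalIntegrable_const
      (fun t ht => hgmono t b (hax.trans ht.1) ht.2 le_rfl)
    simp only [intervalIntegral.integral_const, smul_eq_mul] at h
    linarith
  have h2l : (b - x) * g x ≤ ∫ t in x..b, g t := by
    have h := intervalIntegral.integral_mono_on hxb intervalIntegrable_const hgint2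
      (fun t ht => hgmono x t hax ht.1 ht.2)
    simp only [intervalIntegral.integral_const, smul_eq_mul] at h
    linarith
  have hI : ∫ t in a..b, f t = L * (b ^ 2 - a ^ 2) / 2 - ∫ t in a..b, g t := by
    have h : ∫ t in a..b, g t = (∫ t in a..b, L * t) - ∫ t in a..b, f t := by
      rw [hgdef]
      exact intervalIntegral.integral_sub hLint hint
    rw [h, intervalIntegral.integral_const_mul, integral_id]
    ring
  have hga : g a ≤ g x := hgmono a x le_rfl hax hxb
  have hgb : g x ≤ g b := hgmono x b hax hxb le_rfl
  have hBA : (b - a) * (L - S) = g b - g a := by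
    rw [hS, hgdef]
    field_simp
    ring
  have hM1 : x - a ≤ (b - a) / 2 + |x - (a + b) / 2| := by
    rcases abs_cases (x - (a + b) / 2) with ⟨h, _⟩ | ⟨h, _⟩ <;> linarith
  have hM2 : b - x ≤ (b - a) / 2 + |x - (a + b) / 2| := by
    rcases abs_cases (x - (a + b) / 2) with ⟨h, _⟩ | ⟨h, _⟩ <;> linarith
  have hM0 : (0:ℝ) ≤ (b - a) / 2 + |x - (a + b) / 2| := by
    have := abs_nonneg (x - (a + b) / 2); linarith
  have hkey : (b - a) * (f x - L * (x - (a + b) / 2)) - ∫ t in a..b, f t =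
      ((∫ t in a..x, g t) + ∫ t in x..b, g t) - (b - a) * g x := by
    rw [hI, hsplit]
    simp only [hgdef]
    ring
  rw [hkey]
  have hrhs : (b - a) * ((b - a) / 2 + |x - (a + b) / 2|) * (L - S) =
      ((b - a) / 2 + |x - (a + b) / 2|) * (g b - g a) := by
    rw [← hBA]; ring
  rw [hrhs]
  have e1 : (x - a) * (g x - g a) ≤ ((b - a) / 2 + |x - (a + b) / 2|) * (g b - g a) := by
    nlinarith [mul_le_mul_of_nonneg_right hM1 (sub_nonneg.2 hga),
      mul_le_mul_of_nonneg_left (sub_le_sub_right hgb (g a)) hM0]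
  have e2 : (b - x) * (g b - g x) ≤ ((b - a) / 2 + |x - (a + b) / 2|) * (g b - g a) := by
    nlinarith [mul_le_mul_of_nonneg_right hM2 (sub_nonneg.2 (hga.trans hgb |>.trans_eq rfl)),
      mul_le_mul_of_nonneg_left (sub_le_sub_left hga (g b)) hM0]
  rw [abs_le]
  constructor
  · linarith [e1, h1l, h2l]
  · linarith [e2, h1u, h2u]
end

section
/- Let f : [a,b] → ℝ be (l,L)-Lipschitzian. Then the trapezoid rule satisfies |((b-a)/2)(f(a)+f(b)) - ∫ₐᵇ f(t)dt| ≤ ((b-a)²/8)(L - l). -/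
/-!
Split `[a, b]` at its midpoint `m`. On `[a, m]` the slope bounds squeeze `f` between the lines
through `(a, f a)` of slopes `l` and `L`, and on `[m, b]` between the lines through `(b, f b)` of
slopes `L` and `l`. Integrating these four lines bounds `∫ f` on each half by a multiple of
`f a`, resp. `f b`, up to an error `(L - l) ((b - a) / 2)² / 2` in total, which is the claim.
-/

open MeasureTheory intervalIntegral Set

def SlopeBoundedOn (f : ℝ → ℝ) (l L x y : ℝ) : Prop :=
  ∀ x₁ x₂, x ≤ x₁ → x₁ ≤ x₂ → x₂ ≤ y →
    l * (x₂ - x₁) ≤ f x₂ - f x₁ ∧ f x₂ - f x₁ ≤ L * (x₂ - x₁)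

theorem integral_const_add_mul_sub (c k d x y : ℝ) :
    ∫ t in x..y, (c + k * (t - d)) = c * (y - x) + k / 2 * ((y - d) ^ 2 - (x - d) ^ 2) := by
  have hlin : IntervalIntegrable (fun t => k * (t - d)) volume x y :=
    Continuous.intervalIntegrable (by fun_prop) x y
  rw [integral_add intervalIntegrable_const hlin, intervalIntegral.integral_const_mul,
    integral_comp_sub_right (fun t => t), integral_id, intervalIntegral.integral_const,
    smul_eq_mul]
  ring

namespace SlopeBoundedOn

variable {f : ℝ → ℝ} {l L x y : ℝ}

theorem mono {x' y' : ℝ} (hf : SlopeBoundedOn f l L x y) (hx : x ≤ x') (hy : y' ≤ y) :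
    SlopeBoundedOn f l L x' y' :=
  fun x₁ x₂ h₁ h₁₂ h₂ => hf x₁ x₂ (hx.trans h₁) h₁₂ (h₂.trans hy)

theorem intervalIntegrable (hf : SlopeBoundedOn f l L x y) (hxy : x ≤ y) :
    IntervalIntegrable f volume x y := by
  have hmono : MonotoneOn (fun t => f t - l * t) (uIcc x y) := by
    rw [uIcc_of_le hxy]
    intro s hs t ht hst
    have := (hf s t hs.1 hst ht.2).1
    linarith
  have hlin : IntervalIntegrable (fun t => l * t) volume x y :=
    (continuous_const.mul continuous_id).intervalIntegrable x y
  simpa using hmono.intervalIntegrable.add hlin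

theorem integral_bounds_left (hf : SlopeBoundedOn f l L x y) (hxy : x ≤ y) :
    f x * (y - x) + l / 2 * (y - x) ^ 2 ≤ ∫ t in x..y, f t ∧
      ∫ t in x..y, f t ≤ f x * (y - x) + L / 2 * (y - x) ^ 2 := by
  have hfi := hf.intervalIntegrable hxy
  have hlin (k : ℝ) : IntervalIntegrable (fun t => f x + k * (t - x)) volume x y :=
    Continuous.intervalIntegrable (by fun_prop) x y
  have hlower := integral_mono_on hxy (hlin l) hfi fun t ht => by
    have := (hf x t le_rfl ht.1 ht.2).1
    linarith
  have hupper := integral_mono_on hxy hfi (hlin L) fun t ht => by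
    have := (hf x t le_rfl ht.1 ht.2).2
    linarith
  rw [integral_const_add_mul_sub] at hlower hupper
  constructor <;> linarith

theorem integral_bounds_right (hf : SlopeBoundedOn f l L x y) (hxy : x ≤ y) :
    f y * (y - x) - L / 2 * (y - x) ^ 2 ≤ ∫ t in x..y, f t ∧
      ∫ t in x..y, f t ≤ f y * (y - x) - l / 2 * (y - x) ^ 2 := by
  have hfi := hf.intervalIntegrable hxy
  have hlin (k : ℝ) : IntervalIntegrable (fun t => f y + k * (t - y)) volume x y :=
    Continuous.intervalIntegrable (by fun_prop) x y
  have hlower := integral_mono_on hxy (hlin L) hfi fun t ht => by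
    have := (hf t y ht.1 ht.2 le_rfl).2
    linarith
  have hupper := integral_mono_on hxy hfi (hlin l) fun t ht => by
    have := (hf t y ht.1 ht.2 le_rfl).1
    linarith
  rw [integral_const_add_mul_sub] at hlower hupper
  constructor <;> linarith

end SlopeBoundedOn

theorem stmt_6_general (a b l L : ℝ) (f : ℝ → ℝ) (hab : a < b)
    (hf : ∀ x₁ x₂, a ≤ x₁ → x₁ ≤ x₂ → x₂ ≤ b →
      l * (x₂ - x₁) ≤ f x₂ - f x₁ ∧ f x₂ - f x₁ ≤ L * (x₂ - x₁)) :
    |(b - a) / 2 * (f a + f b) - ∫ t in a..b, f t| ≤ (b - a) ^ 2 / 8 * (L - l) := by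
  have hf : SlopeBoundedOn f l L a b := hf
  have ham : a ≤ (a + b) / 2 := by linarith
  have hmb : (a + b) / 2 ≤ b := by linarith
  set m := (a + b) / 2
  have hsplit : (∫ t in a..m, f t) + ∫ t in m..b, f t = ∫ t in a..b, f t :=
    integral_add_adjacent_intervals ((hf.mono le_rfl hmb).intervalIntegrable ham)
      ((hf.mono ham le_rfl).intervalIntegrable hmb)
  obtain ⟨hleft_lo, hleft_hi⟩ := (hf.mono le_rfl hmb).integral_bounds_left ham
  obtain ⟨hright_lo, hright_hi⟩ := (hf.mono ham le_rfl).integral_bounds_right hmb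
  have hma : m - a = (b - a) / 2 := by ring
  have hbm : b - m = (b - a) / 2 := by ring
  rw [hma] at hleft_lo hleft_hi
  rw [hbm] at hright_lo hright_hi
  rw [abs_le]
  constructor <;> linarith

theorem stmt_6 (a b l L : ℝ) (f : ℝ → ℝ) (hab : a < b) (hlL : l < L)
    (hf : ∀ x₁ x₂, a ≤ x₁ → x₁ ≤ x₂ → x₂ ≤ b →
      l * (x₂ - x₁) ≤ f x₂ - f x₁ ∧ f x₂ - f x₁ ≤ L * (x₂ - x₁))
    (hint : IntervalIntegrable f MeasureTheory.volume a b) :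
    |(b - a) / 2 * (f a + f b) - ∫ t in a..b, f t| ≤ (b - a) ^ 2 / 8 * (L - l) :=
  stmt_6_general a b l L f hab hf
end

section
/- Let f : [a,b] → ℝ be (l,L)-Lipschitzian and S = (f(b)-f(a))/(b-a). Then |((b-a)/2)(f(a)+f(b)) - ∫ₐᵇ f(t)dt| ≤ ((b-a)²/2)(S - l), and similarly |((b-a)/2)(f(a)+f(b)) - ∫ₐᵇ f(t)dt| ≤ ((b-a)²/2)(L - S). -/
theorem stmt_7 (a b l L : ℝ) (f : ℝ → ℝ) (hab : a < b) (hlL : l < L)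
    (hf : ∀ x₁ x₂, a ≤ x₁ → x₁ ≤ x₂ → x₂ ≤ b →
      l * (x₂ - x₁) ≤ f x₂ - f x₁ ∧ f x₂ - f x₁ ≤ L * (x₂ - x₁))
    (hint : IntervalIntegrable f MeasureTheory.volume a b)
    (S : ℝ) (hS : S = (f b - f a) / (b - a)) :
    |(b - a) / 2 * (f a + f b) - ∫ t in a..b, f t| ≤ (b - a) ^ 2 / 2 * (S - l) ∧
    |(b - a) / 2 * (f a + f b) - ∫ t in a..b, f t| ≤ (b - a) ^ 2 / 2 * (L - S) := by
  have hba : (0:ℝ) < b - a := by linarith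
  have hSba : S * (b - a) = f b - f a := by
    rw [hS]; field_simp
  have key : ∀ c m : ℝ, (∫ t in a..b, (c + m * (t - a))) = c * (b - a) + m * (b - a) ^ 2 / 2 := by
    intro c m
    have h1 : IntervalIntegrable (fun _ : ℝ => c) MeasureTheory.volume a b :=
      intervalIntegrable_const
    have h2 : IntervalIntegrable (fun t : ℝ => m * (t - a)) MeasureTheory.volume a b :=
      (Continuous.intervalIntegrable (by fun_prop) a b)
    rw [intervalIntegral.integral_add h1 h2, intervalIntegral.integral_const]
    have h3 : (∫ t in a..b, m * (t - a)) = m * ∫ t in a..b, (t - a) := by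
      rw [intervalIntegral.integral_const_mul]
    rw [h3]
    have h4 : (∫ t in a..b, (t - a)) = (b - a) ^ 2 / 2 := by
      rw [intervalIntegral.integral_sub (Continuous.intervalIntegrable continuous_id' a b)
        (intervalIntegrable_const (c := a))]
      simp [smul_eq_mul]; ring
    rw [h4]; simp [smul_eq_mul]; ring
  have imono : ∀ c m : ℝ, (∀ t ∈ Set.Icc a b, c + m * (t - a) ≤ f t) →
      c * (b - a) + m * (b - a) ^ 2 / 2 ≤ ∫ t in a..b, f t := by
    intro c m h
    rw [← key c m]
    exact intervalIntegral.integral_mono_on hab.le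
      (Continuous.intervalIntegrable (by fun_prop) a b) hint h
  have imono' : ∀ c m : ℝ, (∀ t ∈ Set.Icc a b, f t ≤ c + m * (t - a)) →
      (∫ t in a..b, f t) ≤ c * (b - a) + m * (b - a) ^ 2 / 2 := by
    intro c m h
    rw [← key c m]
    exact intervalIntegral.integral_mono_on hab.le hint
      (Continuous.intervalIntegrable (by fun_prop) a b) h
  have h1 : f a * (b - a) + l * (b - a) ^ 2 / 2 ≤ ∫ t in a..b, f t := by
    apply imono
    intro t ht
    have := (hf a t le_rfl ht.1 ht.2).1
    linarith
  have h2 : (∫ t in a..b, f t) ≤ (f b - l * (b - a)) * (b - a) + l * (b - a) ^ 2 / 2 := by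
    apply imono'
    intro t ht
    have := (hf t b ht.1 ht.2 le_rfl).1
    nlinarith
  have h3 : (∫ t in a..b, f t) ≤ f a * (b - a) + L * (b - a) ^ 2 / 2 := by
    apply imono'
    intro t ht
    have := (hf a t le_rfl ht.1 ht.2).2
    linarith
  have h4 : (f b - L * (b - a)) * (b - a) + L * (b - a) ^ 2 / 2 ≤ ∫ t in a..b, f t := by
    apply imono
    intro t ht
    have := (hf t b ht.1 ht.2 le_rfl).2
    nlinarith
  constructor
  · rw [abs_le]
    constructor <;> nlinarith [sq_nonneg (b - a)]
  · rw [abs_le]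
    constructor <;> nlinarith [sq_nonneg (b - a)]
end

section
/- Let f : [a,b] → ℝ be (l,L)-Lipschitzian. Then for all x ∈ [(3a+b)/4, (a+3b)/4], |(b-a)[(1/2)f(x) - ((L+l)/4)(x - (a+b)/2) + (f(a)+f(b))/4] - ∫ₐᵇ f(t)dt| ≤ (1/2)[(b-a)²/8 + (x - (a+b)/2)²](L - l). -/
open MeasureTheory

private lemma aux_abs_int (g h : ℝ → ℝ) (p q : ℝ) (hpq : p ≤ q)
    (hg : IntervalIntegrable g volume p q) (hh : IntervalIntegrable h volume p q)
    (hb : ∀ s ∈ Set.Icc p q, |g s| ≤ h s) :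
    |∫ s in p..q, g s| ≤ ∫ s in p..q, h s := by
  calc |∫ s in p..q, g s| ≤ ∫ s in p..q, |g s| := by
        simpa [Real.norm_eq_abs] using intervalIntegral.norm_integral_le_integral_norm
          (f := g) (μ := volume) (a := p) (b := q) hpq
    _ ≤ ∫ s in p..q, h s := intervalIntegral.integral_mono_on hpq hg.abs hh hb

private lemma aux_lin_int (K p q : ℝ) : (∫ s in p..q, K * (q - s)) = K * (q - p) ^ 2 / 2 := by
  have h1 : (∫ s in p..q, K * (q - s)) = ∫ s in p..q, (K * q - K * s) := by
    congr 1; funext s; ring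
  have h2 : IntervalIntegrable (fun s : ℝ => K * s) volume p q :=
    (continuous_const.mul continuous_id).intervalIntegrable p q
  have h3 : (∫ s in p..q, K * s) = K * ((q ^ 2 - p ^ 2) / 2) := by
    rw [intervalIntegral.integral_const_mul, integral_id]
  rw [h1, intervalIntegral.integral_sub intervalIntegrable_const h2, h3,
    intervalIntegral.integral_const, smul_eq_mul]
  ring

private lemma aux_lin_int' (K p q : ℝ) : (∫ s in p..q, K * (s - p)) = K * (q - p) ^ 2 / 2 := by
  have h1 : (∫ s in p..q, K * (s - p)) = ∫ s in p..q, (K * s - K * p) := by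
    congr 1; funext s; ring
  have h2 : IntervalIntegrable (fun s : ℝ => K * s) volume p q :=
    (continuous_const.mul continuous_id).intervalIntegrable p q
  have h3 : (∫ s in p..q, K * s) = K * ((q ^ 2 - p ^ 2) / 2) := by
    rw [intervalIntegral.integral_const_mul, integral_id]
  rw [h1, intervalIntegral.integral_sub h2 intervalIntegrable_const, h3,
    intervalIntegral.integral_const, smul_eq_mul]
  ring

theorem stmt_8 (a b l L : ℝ) (f : ℝ → ℝ) (hab : a < b) (hlL : l < L)
    (hf : ∀ x₁ x₂, a ≤ x₁ → x₁ ≤ x₂ → x₂ ≤ b →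
      l * (x₂ - x₁) ≤ f x₂ - f x₁ ∧ f x₂ - f x₁ ≤ L * (x₂ - x₁))
    (hint : IntervalIntegrable f MeasureTheory.volume a b)
    (x : ℝ) (hx : x ∈ Set.Icc ((3 * a + b) / 4) ((a + 3 * b) / 4)) :
    |(b - a) * (1 / 2 * f x - (L + l) / 4 * (x - (a + b) / 2) + (f a + f b) / 4)
        - ∫ t in a..b, f t| ≤
      1 / 2 * ((b - a) ^ 2 / 8 + (x - (a + b) / 2) ^ 2) * (L - l) := by
  obtain ⟨hx1, hx2⟩ := hx
  set c₁ : ℝ := (3 * a + b) / 4 with hc1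
  set c₂ : ℝ := (a + 3 * b) / 4 with hc2
  set K : ℝ := (L - l) / 2 with hKdef
  set φ : ℝ → ℝ := fun t => f t - (L + l) / 2 * t with hφdef
  have hac1 : a ≤ c₁ := by rw [hc1]; linarith
  have hc2b : c₂ ≤ b := by rw [hc2]; linarith
  have hax : a ≤ x := le_trans hac1 hx1
  have hxb : x ≤ b := le_trans hx2 hc2b
  have hlip : ∀ x₁ x₂, a ≤ x₁ → x₁ ≤ x₂ → x₂ ≤ b → |φ x₂ - φ x₁| ≤ K * (x₂ - x₁) := by
    intro x₁ x₂ h1 h2 h3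
    obtain ⟨hl, hL⟩ := hf x₁ x₂ h1 h2 h3
    rw [abs_le]
    constructor <;> simp only [hφdef, hKdef] <;> nlinarith
  have hlinint : IntervalIntegrable (fun t : ℝ => (L + l) / 2 * t) volume a b :=
    (continuous_const.mul continuous_id).intervalIntegrable a b
  have hφint : IntervalIntegrable φ volume a b := hint.sub hlinint
  have hsub : ∀ p q, a ≤ p → p ≤ q → q ≤ b → IntervalIntegrable φ volume p q := by
    intro p q h1 h2 h3
    apply hφint.mono_set
    intro y hy
    rw [Set.uIcc_of_le hab.le]
    rw [Set.uIcc_of_le h2] at hy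
    exact ⟨le_trans h1 hy.1, le_trans hy.2 h3⟩
  set A : ℝ := ∫ s in c₁..x, (φ x - φ s) with hA
  set B : ℝ := ∫ s in a..c₁, (φ s - φ a) with hB
  set C : ℝ := ∫ s in c₂..b, (φ b - φ s) with hC
  set D : ℝ := ∫ s in x..c₂, (φ s - φ x) with hD
  have hIA : |A| ≤ K * (x - c₁) ^ 2 / 2 := by
    rw [hA, ← aux_lin_int K c₁ x]
    apply aux_abs_int _ _ _ _ hx1
    · exact (intervalIntegrable_const).sub (hsub c₁ x hac1 hx1 hxb)
    · exact (continuous_const.mul (continuous_const.sub continuous_id)).intervalIntegrable _ _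
    · intro s hs
      exact hlip s x (le_trans hac1 hs.1) hs.2 hxb
  have hIB : |B| ≤ K * (c₁ - a) ^ 2 / 2 := by
    rw [hB, ← aux_lin_int' K a c₁]
    apply aux_abs_int _ _ _ _ hac1
    · exact (hsub a c₁ le_rfl hac1 (le_trans hx1 hxb)).sub (intervalIntegrable_const)
    · exact (continuous_const.mul (continuous_id.sub continuous_const)).intervalIntegrable _ _
    · intro s hs
      exact hlip a s le_rfl hs.1 (le_trans hs.2 (le_trans hx1 hxb))
  have hIC : |C| ≤ K * (b - c₂) ^ 2 / 2 := by
    rw [hC, ← aux_lin_int K c₂ b]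
    apply aux_abs_int _ _ _ _ hc2b
    · exact (intervalIntegrable_const).sub (hsub c₂ b (le_trans hax hx2) hc2b le_rfl)
    · exact (continuous_const.mul (continuous_const.sub continuous_id)).intervalIntegrable _ _
    · intro s hs
      exact hlip s b (le_trans (le_trans hax hx2) hs.1) hs.2 le_rfl
  have hID : |D| ≤ K * (c₂ - x) ^ 2 / 2 := by
    rw [hD, ← aux_lin_int' K x c₂]
    apply aux_abs_int _ _ _ _ hx2
    · exact (hsub x c₂ hax hx2 hc2b).sub (intervalIntegrable_const)
    · exact (continuous_const.mul (continuous_id.sub continuous_const)).intervalIntegrable _ _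
    · intro s hs
      exact hlip x s hax hs.1 (le_trans hs.2 hc2b)
  have eA : A = (x - c₁) * φ x - ∫ s in c₁..x, φ s := by
    rw [hA, intervalIntegral.integral_sub intervalIntegrable_const (hsub c₁ x hac1 hx1 hxb),
      intervalIntegral.integral_const, smul_eq_mul]
  have eB : B = (∫ s in a..c₁, φ s) - (c₁ - a) * φ a := by
    rw [hB, intervalIntegral.integral_sub (hsub a c₁ le_rfl hac1 (le_trans hx1 hxb))
      intervalIntegrable_const, intervalIntegral.integral_const, smul_eq_mul]
  have eC : C = (b - c₂) * φ b - ∫ s in c₂..b, φ s := by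
    rw [hC, intervalIntegral.integral_sub intervalIntegrable_const
      (hsub c₂ b (le_trans hax hx2) hc2b le_rfl), intervalIntegral.integral_const, smul_eq_mul]
  have eD : D = (∫ s in x..c₂, φ s) - (c₂ - x) * φ x := by
    rw [hD, intervalIntegral.integral_sub (hsub x c₂ hax hx2 hc2b) intervalIntegrable_const,
      intervalIntegral.integral_const, smul_eq_mul]
  have hsplit : (∫ s in a..c₁, φ s) + (∫ s in c₁..x, φ s) + (∫ s in x..c₂, φ s)
      + (∫ s in c₂..b, φ s) = ∫ s in a..b, φ s := by
    rw [intervalIntegral.integral_add_adjacent_intervals (hsub a c₁ le_rfl hac1 (le_trans hx1 hxb))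
      (hsub c₁ x hac1 hx1 hxb),
      intervalIntegral.integral_add_adjacent_intervals (hsub a x le_rfl hax hxb)
      (hsub x c₂ hax hx2 hc2b),
      intervalIntegral.integral_add_adjacent_intervals (hsub a c₂ le_rfl (le_trans hax hx2) hc2b)
      (hsub c₂ b (le_trans hax hx2) hc2b le_rfl)]
  have hfφ : (∫ t in a..b, f t) = (∫ t in a..b, φ t) + (L + l) / 2 * ((b ^ 2 - a ^ 2) / 2) := by
    have h1 : (∫ t in a..b, φ t) = (∫ t in a..b, f t) - ∫ t in a..b, (L + l) / 2 * t :=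
      intervalIntegral.integral_sub hint hlinint
    have h2 : (∫ t in a..b, (L + l) / 2 * t) = (L + l) / 2 * ((b ^ 2 - a ^ 2) / 2) := by
      rw [intervalIntegral.integral_const_mul, integral_id]
    rw [h1, h2]; ring
  have key : (b - a) * (1 / 2 * f x - (L + l) / 4 * (x - (a + b) / 2) + (f a + f b) / 4)
      - (∫ t in a..b, f t) = A - B + C - D := by
    rw [eA, eB, eC, eD, hfφ, ← hsplit]
    have hfx : f x = φ x + (L + l) / 2 * x := by rw [hφdef]; ring
    have hfa : f a = φ a + (L + l) / 2 * a := by rw [hφdef]; ring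
    have hfb : f b = φ b + (L + l) / 2 * b := by rw [hφdef]; ring
    rw [hfx, hfa, hfb, hc1, hc2]
    ring
  rw [key]
  have hsum : K * (x - c₁) ^ 2 / 2 + K * (c₁ - a) ^ 2 / 2 + K * (b - c₂) ^ 2 / 2
      + K * (c₂ - x) ^ 2 / 2 = 1 / 2 * ((b - a) ^ 2 / 8 + (x - (a + b) / 2) ^ 2) * (L - l) := by
    rw [hKdef, hc1, hc2]; ring
  have h1 := abs_le.mp hIA
  have h2 := abs_le.mp hIB
  have h3 := abs_le.mp hIC
  have h4 := abs_le.mp hID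
  rw [abs_le]
  constructor <;> linarith
end

section
/- Let f : [a,b] → ℝ be (l,L)-Lipschitzian and S = (f(b)-f(a))/(b-a). Then for all x ∈ [(3a+b)/4, (a+3b)/4], |(b-a)[(1/2)f(x) - (l/2)(x - (a+b)/2) + (f(a)+f(b))/4] - ∫ₐᵇ f(t)dt| ≤ (b-a)[(b-a)/4 + |x - (a+b)/2|](S - l). -/
set_option maxHeartbeats 1000000

open MeasureTheory intervalIntegral

theorem stmt_9 (a b l L : ℝ) (f : ℝ → ℝ) (hab : a < b) (hlL : l < L)
    (hf : ∀ x₁ x₂, a ≤ x₁ → x₁ ≤ x₂ → x₂ ≤ b →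
      l * (x₂ - x₁) ≤ f x₂ - f x₁ ∧ f x₂ - f x₁ ≤ L * (x₂ - x₁))
    (hint : IntervalIntegrable f MeasureTheory.volume a b)
    (S : ℝ) (hS : S = (f b - f a) / (b - a))
    (x : ℝ) (hx : x ∈ Set.Icc ((3 * a + b) / 4) ((a + 3 * b) / 4)) :
    |(b - a) * (1 / 2 * f x - l / 2 * (x - (a + b) / 2) + (f a + f b) / 4)
        - ∫ t in a..b, f t| ≤
      (b - a) * ((b - a) / 4 + |x - (a + b) / 2|) * (S - l) := by
  obtain ⟨hx1, hx2⟩ := hx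
  have hax : a ≤ x := by linarith
  have hxb : x ≤ b := by linarith
  set g : ℝ → ℝ := fun t => f t - l * t with hg
  have hgmono : ∀ t₁ t₂, a ≤ t₁ → t₁ ≤ t₂ → t₂ ≤ b → g t₁ ≤ g t₂ := by
    intro t₁ t₂ h1 h2 h3
    have := (hf t₁ t₂ h1 h2 h3).1
    simp only [hg]
    nlinarith
  have hlin : IntervalIntegrable (fun t => l * t) volume a b :=
    (continuous_const.mul continuous_id).intervalIntegrable a b
  have hgint : IntervalIntegrable g volume a b := hint.sub hlin
  have h1int : IntervalIntegrable g volume a x := by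
    apply hgint.mono_set
    rw [Set.uIcc_of_le hax, Set.uIcc_of_le hab.le]
    exact Set.Icc_subset_Icc le_rfl hxb
  have h2int : IntervalIntegrable g volume x b := by
    apply hgint.mono_set
    rw [Set.uIcc_of_le hxb, Set.uIcc_of_le hab.le]
    exact Set.Icc_subset_Icc hax le_rfl
  have hI1lo : (x - a) * g a ≤ ∫ t in a..x, g t := by
    have := intervalIntegral.integral_mono_on hax intervalIntegrable_const h1int
      (fun t ht => hgmono a t le_rfl ht.1 (ht.2.trans hxb))
    simpa only [intervalIntegral.integral_const, smul_eq_mul, mul_comm] using this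
  have hI1hi : (∫ t in a..x, g t) ≤ (x - a) * g x := by
    have := intervalIntegral.integral_mono_on hax h1int intervalIntegrable_const
      (fun t ht => hgmono t x ht.1 ht.2 hxb)
    simpa only [intervalIntegral.integral_const, smul_eq_mul, mul_comm] using this
  have hI2lo : (b - x) * g x ≤ ∫ t in x..b, g t := by
    have := intervalIntegral.integral_mono_on hxb intervalIntegrable_const h2int
      (fun t ht => hgmono x t hax ht.1 ht.2)
    simpa only [intervalIntegral.integral_const, smul_eq_mul, mul_comm] using this
  have hI2hi : (∫ t in x..b, g t) ≤ (b - x) * g b := by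
    have := intervalIntegral.integral_mono_on hxb h2int intervalIntegrable_const
      (fun t ht => hgmono t b (hax.trans ht.1) ht.2 le_rfl)
    simpa only [intervalIntegral.integral_const, smul_eq_mul, mul_comm] using this
  have hsplit : (∫ t in a..b, g t) = (∫ t in a..x, g t) + ∫ t in x..b, g t :=
    (intervalIntegral.integral_add_adjacent_intervals h1int h2int).symm
  have hgf : (∫ t in a..b, g t) = (∫ t in a..b, f t) - l * (b ^ 2 - a ^ 2) / 2 := by
    simp only [hg]
    rw [intervalIntegral.integral_sub hint hlin, intervalIntegral.integral_const_mul,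
      integral_id]
    ring
  have hSl : (b - a) * (S - l) = g b - g a := by
    show (b - a) * (S - l) = (f b - l * b) - (f a - l * a)
    rw [hS]
    have hba : b - a ≠ 0 := sub_ne_zero.mpr hab.ne'
    field_simp
    ring
  have hgab : g a ≤ g x := hgmono a x le_rfl hax hxb
  have hgxb : g x ≤ g b := hgmono x b hax hxb le_rfl
  set A := ∫ t in a..x, g t
  set B := ∫ t in x..b, g t
  have hfx : f x = g x + l * x := by show f x = (f x - l * x) + l * x; ring
  have hfa : f a = g a + l * a := by show f a = (f a - l * a) + l * a; ring
  have hfb : f b = g b + l * b := by show f b = (f b - l * b) + l * b; ring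
  have hintf : (∫ t in a..b, f t) = A + B + l * (b ^ 2 - a ^ 2) / 2 := by
    have := hgf
    rw [hsplit] at this
    linarith
  rw [abs_le]
  rcases abs_cases (x - (a + b) / 2) with ⟨habs, hsgn⟩ | ⟨habs, hsgn⟩ <;>
    rw [habs] <;> constructor <;>
    rw [hintf, hfx, hfa, hfb] <;>
    nlinarith [hSl, mul_nonneg (sub_nonneg.2 hgab) (sub_nonneg.2 hax),
      mul_nonneg (sub_nonneg.2 hgxb) (sub_nonneg.2 hxb),
      mul_nonneg (sub_nonneg.2 hgab) (sub_nonneg.2 hxb),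
      mul_nonneg (sub_nonneg.2 hgxb) (sub_nonneg.2 hax),
      mul_nonneg (sub_nonneg.2 hgab) (sub_nonneg.2 hx1),
      mul_nonneg (sub_nonneg.2 hgxb) (sub_nonneg.2 hx2)]
end

section
/- Let f : [a,b] → ℝ be L-Lipschitzian (|f(x)-f(y)| ≤ L|x-y| for all x, y ∈ [a,b]). Then for all h ∈ [0,1] and all x with a + h(b-a)/2 ≤ x ≤ b - h(b-a)/2, |(b-a)[f(x)(1-h) + h(f(a)+f(b))/2] - ∫ₐᵇ f(t)dt| ≤ [((b-a)²/4)(h² + (h-1)²) + (x - (a+b)/2)²] L. -/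
open MeasureTheory intervalIntegral

lemma aux_lin (c d : ℝ) (L : ℝ) :
    (∫ t in c..d, L * (t - c)) = L * (d - c) ^ 2 / 2 := by
  have : (∫ t in c..d, L * (t - c))
      = L * ((∫ t in c..d, t) - ∫ t in c..d, (c:ℝ)) := by
    rw [← intervalIntegral.integral_sub intervalIntegrable_id intervalIntegrable_const,
      ← intervalIntegral.integral_const_mul]
  rw [this, integral_id, intervalIntegral.integral_const, smul_eq_mul]
  ring

lemma aux_lin' (c d : ℝ) (L : ℝ) :
    (∫ t in c..d, L * (d - t)) = L * (d - c) ^ 2 / 2 := by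
  have : (∫ t in c..d, L * (d - t))
      = L * ((∫ t in c..d, (d:ℝ)) - ∫ t in c..d, t) := by
    rw [← intervalIntegral.integral_sub intervalIntegrable_const intervalIntegrable_id,
      ← intervalIntegral.integral_const_mul]
  rw [this, integral_id, intervalIntegral.integral_const, smul_eq_mul]
  ring

lemma aux1 (L c d : ℝ) (g : ℝ → ℝ) (hcd : c ≤ d)
    (hg : IntervalIntegrable g volume c d)
    (hb : ∀ t ∈ Set.Icc c d, |g t| ≤ L * (t - c)) :
    |∫ t in c..d, g t| ≤ L * (d - c) ^ 2 / 2 := by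
  have h1 : |∫ t in c..d, g t| ≤ ∫ t in c..d, |g t| :=
    intervalIntegral.abs_integral_le_integral_abs hcd
  have hcont : IntervalIntegrable (fun t => L * (t - c)) volume c d :=
    (by continuity : Continuous fun t : ℝ => L * (t - c)).intervalIntegrable c d
  have h2 : (∫ t in c..d, |g t|) ≤ ∫ t in c..d, L * (t - c) :=
    intervalIntegral.integral_mono_on hcd hg.abs hcont hb
  rw [aux_lin] at h2
  linarith

lemma aux2 (L c d : ℝ) (g : ℝ → ℝ) (hcd : c ≤ d)
    (hg : IntervalIntegrable g volume c d)
    (hb : ∀ t ∈ Set.Icc c d, |g t| ≤ L * (d - t)) :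
    |∫ t in c..d, g t| ≤ L * (d - c) ^ 2 / 2 := by
  have h1 : |∫ t in c..d, g t| ≤ ∫ t in c..d, |g t| :=
    intervalIntegral.abs_integral_le_integral_abs hcd
  have hcont : IntervalIntegrable (fun t => L * (d - t)) volume c d :=
    (by continuity : Continuous fun t : ℝ => L * (d - t)).intervalIntegrable c d
  have h2 : (∫ t in c..d, |g t|) ≤ ∫ t in c..d, L * (d - t) :=
    intervalIntegral.integral_mono_on hcd hg.abs hcont hb
  rw [aux_lin'] at h2
  linarith

theorem stmt_12 (a b L : ℝ) (f : ℝ → ℝ) (hab : a < b) (hL : 0 < L)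
    (hf : ∀ x y, x ∈ Set.Icc a b → y ∈ Set.Icc a b → |f x - f y| ≤ L * |x - y|)
    (hint : IntervalIntegrable f MeasureTheory.volume a b)
    (h x : ℝ) (hh : h ∈ Set.Icc (0:ℝ) 1)
    (hx1 : a + h * (b - a) / 2 ≤ x) (hx2 : x ≤ b - h * (b - a) / 2) :
    |(b - a) * (f x * (1 - h) + h * (f a + f b) / 2) - ∫ t in a..b, f t| ≤
      ((b - a) ^ 2 / 4 * (h ^ 2 + (h - 1) ^ 2) + (x - (a + b) / 2) ^ 2) * L := by
  obtain ⟨h0, h1⟩ := hh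
  set α := a + h * (b - a) / 2 with hα
  set β := b - h * (b - a) / 2 with hβ
  have haα : a ≤ α := by rw [hα]; nlinarith [mul_nonneg h0 (sub_nonneg.mpr hab.le)]
  have hβb : β ≤ b := by rw [hβ]; nlinarith [mul_nonneg h0 (sub_nonneg.mpr hab.le)]
  have hαx : α ≤ x := hx1
  have hxβ : x ≤ β := hx2
  have hax : a ≤ x := le_trans haα hαx
  have hxb : x ≤ b := le_trans hxβ hβb
  have mono : ∀ c d : ℝ, a ≤ c → c ≤ d → d ≤ b → IntervalIntegrable f volume c d := by
    intro c d h1 h2 h3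
    apply hint.mono_set
    rw [Set.uIcc_of_le h2, Set.uIcc_of_le hab.le]
    exact Set.Icc_subset_Icc h1 h3
  have i1 := mono a α le_rfl haα (le_trans hαx hxb)
  have i2 := mono α x haα hαx hxb
  have i3 := mono x β hax hxβ hβb
  have i4 := mono β b (le_trans hax hxβ) hβb le_rfl
  have split : ((∫ t in a..α, f t) + ∫ t in α..x, f t) + ((∫ t in x..β, f t) + ∫ t in β..b, f t)
      = ∫ t in a..b, f t := by
    rw [intervalIntegral.integral_add_adjacent_intervals i1 i2,
      intervalIntegral.integral_add_adjacent_intervals i3 i4,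
      intervalIntegral.integral_add_adjacent_intervals (mono a x le_rfl hax hxb)
        (mono x b hax hxb le_rfl)]
  have key : (b - a) * (f x * (1 - h) + h * (f a + f b) / 2) - ∫ t in a..b, f t
      = (∫ t in a..α, (f a - f t)) + (∫ t in α..x, (f x - f t))
        + ((∫ t in x..β, (f x - f t)) + ∫ t in β..b, (f b - f t)) := by
    rw [intervalIntegral.integral_sub intervalIntegrable_const i1,
      intervalIntegral.integral_sub intervalIntegrable_const i2,
      intervalIntegral.integral_sub intervalIntegrable_const i3,
      intervalIntegral.integral_sub intervalIntegrable_const i4,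
      ← split]
    simp only [intervalIntegral.integral_const, smul_eq_mul, hα, hβ]
    ring
  have memb : ∀ c d t : ℝ, a ≤ c → d ≤ b → t ∈ Set.Icc c d → t ∈ Set.Icc a b := by
    intro c d t h1 h2 ht
    exact ⟨le_trans h1 ht.1, le_trans ht.2 h2⟩
  have T1 : |∫ t in a..α, (f a - f t)| ≤ L * (α - a) ^ 2 / 2 := by
    apply aux1 L a α _ haα ((_root_.intervalIntegrable_const).sub i1)
    intro t ht
    have := hf a t ⟨le_rfl, hab.le⟩ (memb a α t le_rfl (le_trans hαx hxb) ht)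
    rwa [show |a - t| = t - a by rw [abs_sub_comm]; exact abs_of_nonneg (by linarith [ht.1])] at this
  have T2 : |∫ t in α..x, (f x - f t)| ≤ L * (x - α) ^ 2 / 2 := by
    apply aux2 L α x _ hαx ((_root_.intervalIntegrable_const).sub i2)
    intro t ht
    have := hf x t ⟨hax, hxb⟩ (memb α x t haα hxb ht)
    rwa [show |x - t| = x - t from abs_of_nonneg (by linarith [ht.2])] at this
  have T3 : |∫ t in x..β, (f x - f t)| ≤ L * (β - x) ^ 2 / 2 := by
    apply aux1 L x β _ hxβ ((_root_.intervalIntegrable_const).sub i3)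
    intro t ht
    have := hf x t ⟨hax, hxb⟩ (memb x β t hax hβb ht)
    rwa [show |x - t| = t - x by rw [abs_sub_comm]; exact abs_of_nonneg (by linarith [ht.1])] at this
  have T4 : |∫ t in β..b, (f b - f t)| ≤ L * (b - β) ^ 2 / 2 := by
    apply aux2 L β b _ hβb ((_root_.intervalIntegrable_const).sub i4)
    intro t ht
    have := hf b t ⟨hab.le, le_rfl⟩ (memb β b t (le_trans hax hxβ) le_rfl ht)
    rwa [show |b - t| = b - t from abs_of_nonneg (by linarith [ht.2])] at this
  have triangle : |(b - a) * (f x * (1 - h) + h * (f a + f b) / 2) - ∫ t in a..b, f t|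
      ≤ L * (α - a) ^ 2 / 2 + L * (x - α) ^ 2 / 2 + (L * (β - x) ^ 2 / 2 + L * (b - β) ^ 2 / 2) := by
    rw [key]
    calc |_ + _ + (_ + _)| ≤ |(∫ t in a..α, (f a - f t)) + (∫ t in α..x, (f x - f t))|
          + |(∫ t in x..β, (f x - f t)) + ∫ t in β..b, (f b - f t)| := abs_add_le _ _
      _ ≤ (|∫ t in a..α, (f a - f t)| + |∫ t in α..x, (f x - f t)|)
          + (|∫ t in x..β, (f x - f t)| + |∫ t in β..b, (f b - f t)|) :=
        add_le_add (abs_add_le _ _) (abs_add_le _ _)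
      _ ≤ _ := by linarith
  have final : L * (α - a) ^ 2 / 2 + L * (x - α) ^ 2 / 2 + (L * (β - x) ^ 2 / 2 + L * (b - β) ^ 2 / 2)
      = ((b - a) ^ 2 / 4 * (h ^ 2 + (h - 1) ^ 2) + (x - (a + b) / 2) ^ 2) * L := by
    rw [hα, hβ]; ring
  linarith
end

section
/- Let f : [a,b] → ℝ be L-Lipschitzian and S = (f(b)-f(a))/(b-a). Then for all h ∈ [0,1] and all x with a + h(b-a)/2 ≤ x ≤ b - h(b-a)/2, |(b-a){[f(x) + L(x - (a+b)/2)](1-h) + h(f(a)+f(b))/2} - ∫ₐᵇ f(t)dt| ≤ (b-a) · max{h(b-a)/2, x - a - h(b-a)/2, b - x - h(b-a)/2} · (S + L). -/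
set_option maxHeartbeats 1000000

open intervalIntegral MeasureTheory

theorem stmt_13 (a b L : ℝ) (f : ℝ → ℝ) (hab : a < b) (hL : 0 < L)
    (hf : ∀ x y, x ∈ Set.Icc a b → y ∈ Set.Icc a b → |f x - f y| ≤ L * |x - y|)
    (hint : IntervalIntegrable f MeasureTheory.volume a b)
    (S : ℝ) (hS : S = (f b - f a) / (b - a))
    (h x : ℝ) (hh : h ∈ Set.Icc (0:ℝ) 1)
    (hx1 : a + h * (b - a) / 2 ≤ x) (hx2 : x ≤ b - h * (b - a) / 2) :
    |(b - a) * ((f x + L * (x - (a + b) / 2)) * (1 - h) + h * (f a + f b) / 2)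
        - ∫ t in a..b, f t| ≤
      (b - a) * max (h * (b - a) / 2) (max (x - a - h * (b - a) / 2) (b - x - h * (b - a) / 2))
        * (S + L) := by
  obtain ⟨hh0, hh1⟩ := hh
  set c := a + h * (b - a) / 2 with hc
  set d := b - h * (b - a) / 2 with hd
  clear_value c d
  have hba : (0:ℝ) < b - a := by linarith
  have hhba : 0 ≤ h * (b - a) := mul_nonneg hh0 hba.le
  have hac : a ≤ c := by rw [hc]; linarith
  have hdb : d ≤ b := by rw [hd]; linarith
  have hcx : c ≤ x := hx1
  have hxd : x ≤ d := hx2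
  have hax : a ≤ x := hac.trans hcx
  have hxb : x ≤ b := hxd.trans hdb
  obtain ⟨g, hg⟩ : ∃ g : ℝ → ℝ, g = fun t => f t + L * t := ⟨_, rfl⟩
  have gmono : ∀ s t, a ≤ s → s ≤ t → t ≤ b → g s ≤ g t := by
    intro s t hs hst ht
    have h1 := hf s t ⟨hs, hst.trans ht⟩ ⟨hs.trans hst, ht⟩
    rw [show |s - t| = t - s from by rw [abs_of_nonpos (by linarith)]; ring] at h1
    have h2 := (abs_le.mp h1).1
    have h3 := (abs_le.mp h1).2
    simp only [hg]
    linarith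
  have hgint : IntervalIntegrable g volume a b := by
    rw [hg]
    exact hint.add ((intervalIntegrable_id).const_mul L)
  have subint : ∀ u v, a ≤ u → u ≤ v → v ≤ b → IntervalIntegrable g volume u v := by
    intro u v h1 h2 h3
    refine hgint.mono_set ?_
    rw [Set.uIcc_of_le h2, Set.uIcc_of_le (by linarith)]
    exact Set.Icc_subset_Icc h1 h3
  have hsplit : (∫ t in a..b, g t) = (∫ t in a..c, g t) + (∫ t in c..x, g t)
      + (∫ t in x..d, g t) + (∫ t in d..b, g t) := by
    rw [integral_add_adjacent_intervals (subint a c le_rfl hac (by linarith))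
          (subint c x hac hcx hxb),
        integral_add_adjacent_intervals
          (subint a x le_rfl hax hxb) (subint x d hax hxd hdb),
        integral_add_adjacent_intervals
          (subint a d le_rfl (hax.trans hxd) hdb) (subint d b (by linarith) hdb le_rfl)]
  have hintg : (∫ t in a..b, g t) = (∫ t in a..b, f t) + L * ((b^2 - a^2)/2) := by
    simp only [hg]
    rw [integral_add hint ((intervalIntegrable_id).const_mul L),
        intervalIntegral.integral_const_mul, integral_id]
  have hconst : ∀ (u v C : ℝ), a ≤ u → u ≤ v → v ≤ b →
      (∫ t in u..v, (C - g t)) = (v - u) * C - ∫ t in u..v, g t := by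
    intro u v C h1 h2 h3
    rw [intervalIntegral.integral_sub (_root_.intervalIntegrable_const) (subint u v h1 h2 h3),
      intervalIntegral.integral_const]
    simp [smul_eq_mul]
  have key : (b - a) * ((f x + L * (x - (a + b) / 2)) * (1 - h) + h * (f a + f b) / 2)
        - (∫ t in a..b, f t)
      = (∫ t in a..c, (g a - g t)) + (∫ t in c..x, (g x - g t))
        + (∫ t in x..d, (g x - g t)) + (∫ t in d..b, (g b - g t)) := by
    rw [hconst a c (g a) le_rfl hac (by linarith),
        hconst c x (g x) hac hcx hxb,
        hconst x d (g x) hax hxd (by linarith),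
        hconst d b (g b) (by linarith) hdb le_rfl]
    have : (∫ t in a..c, g t) + (∫ t in c..x, g t) + (∫ t in x..d, g t)
        + (∫ t in d..b, g t) = (∫ t in a..b, f t) + L * ((b^2 - a^2)/2) := by
      rw [← hsplit, hintg]
    have hga : g a = f a + L * a := by rw [hg]
    have hgb : g b = f b + L * b := by rw [hg]
    have hgx : g x = f x + L * x := by rw [hg]
    rw [hga, hgb, hgx] at *
    rw [hc, hd] at *
    nlinarith [this]
  set M := max (h * (b - a) / 2) (max (x - a - h * (b - a) / 2) (b - x - h * (b - a) / 2)) with hM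
  clear_value M
  have hM0 : 0 ≤ M := by rw [hM]; exact le_max_of_le_left (by positivity)
  have hM1 : h * (b - a) / 2 ≤ M := by rw [hM]; exact le_max_left _ _
  have hM2 : x - c ≤ M := by
    rw [hM, hc]; refine le_trans (le_of_eq (by ring)) (le_max_of_le_right (le_max_left _ _))
  have hM3 : d - x ≤ M := by
    rw [hM, hd]; refine le_trans (le_of_eq (by ring)) (le_max_of_le_right (le_max_right _ _))
  have hRHS : (b - a) * M * (S + L) = M * (g b - g a) := by
    rw [hS, hg]
    field_simp
    ring
  rw [key, hRHS]
  clear key hRHS hsplit hintg hconst hint hf hgint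
  -- monotonicity facts
  have m1 : g a ≤ g c := gmono a c le_rfl hac (by linarith)
  have m2 : g c ≤ g x := gmono c x hac hcx hxb
  have m3 : g x ≤ g d := gmono x d hax hxd (by linarith)
  have m4 : g d ≤ g b := gmono d b (by linarith) hdb le_rfl
  -- bounds on each integral
  have mono_int : ∀ u v C1 C2 : ℝ, a ≤ u → u ≤ v → v ≤ b →
      (∀ t ∈ Set.Icc u v, C1 - g t ≤ C2) → (∫ t in u..v, (C1 - g t)) ≤ (v - u) * C2 := by
    intro u v C1 C2 h1 h2 h3 hb
    calc (∫ t in u..v, (C1 - g t)) ≤ ∫ t in u..v, C2 := by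
          refine integral_mono_on h2 ((_root_.intervalIntegrable_const).sub (subint u v h1 h2 h3)) _root_.intervalIntegrable_const hb
      _ = (v - u) * C2 := by rw [intervalIntegral.integral_const]; simp [smul_eq_mul]
  have mono_int' : ∀ u v C1 C2 : ℝ, a ≤ u → u ≤ v → v ≤ b →
      (∀ t ∈ Set.Icc u v, C2 ≤ C1 - g t) → (v - u) * C2 ≤ (∫ t in u..v, (C1 - g t)) := by
    intro u v C1 C2 h1 h2 h3 hb
    calc (v - u) * C2 = ∫ t in u..v, C2 := by rw [intervalIntegral.integral_const]; simp [smul_eq_mul]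
      _ ≤ (∫ t in u..v, (C1 - g t)) := by
          refine integral_mono_on h2 _root_.intervalIntegrable_const ((_root_.intervalIntegrable_const).sub (subint u v h1 h2 h3)) hb
  rw [abs_le]
  constructor
  · -- lower bound
    have u1 : (c - a) * (g a - g c) ≤ ∫ t in a..c, (g a - g t) := by
      refine mono_int' a c (g a) (g a - g c) le_rfl hac (by linarith) ?_
      intro t ht
      have := gmono t c ht.1 ht.2 (hcx.trans hxb)
      linarith
    have u2 : (x - c) * 0 ≤ ∫ t in c..x, (g x - g t) := by
      refine mono_int' c x (g x) 0 hac hcx hxb ?_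
      intro t ht
      have := gmono t x (hac.trans ht.1) ht.2 hxb
      linarith
    have u3 : (d - x) * (g x - g d) ≤ ∫ t in x..d, (g x - g t) := by
      refine mono_int' x d (g x) (g x - g d) hax hxd (by linarith) ?_
      intro t ht
      have := gmono t d (hax.trans ht.1) ht.2 (by linarith)
      linarith
    have u4 : (b - d) * 0 ≤ ∫ t in d..b, (g b - g t) := by
      refine mono_int' d b (g b) 0 (by linarith) hdb le_rfl ?_
      intro t ht
      have := gmono t b ((hax.trans hxd).trans ht.1) ht.2 le_rfl
      linarith
    have hca : c - a = h * (b-a)/2 := by rw [hc]; ring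
    have e1 : (c - a) * (g a - g c) ≥ -(M * (g c - g a)) := by
      have h1 : 0 ≤ g c - g a := by linarith
      have h2 : c - a ≤ M := by rw [hca]; exact hM1
      linarith [mul_le_mul_of_nonneg_right h2 h1]
    have e3 : (d - x) * (g x - g d) ≥ -(M * (g d - g x)) := by
      have h1 : 0 ≤ g d - g x := by linarith
      linarith [mul_le_mul_of_nonneg_right hM3 h1]
    have hle : g c - g a + (g d - g x) ≤ g b - g a := by linarith
    have final : M * (g c - g a) + M * (g d - g x) ≤ M * (g b - g a) := by
      have h2 := mul_le_mul_of_nonneg_left hle hM0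
      linarith [mul_add M (g c - g a) (g d - g x)]
    linarith
  · -- upper bound
    have u1 : (∫ t in a..c, (g a - g t)) ≤ (c - a) * 0 := by
      refine mono_int a c (g a) 0 le_rfl hac (by linarith) ?_
      intro t ht
      have := gmono a t le_rfl ht.1 (ht.2.trans (hcx.trans hxb))
      linarith
    have u2 : (∫ t in c..x, (g x - g t)) ≤ (x - c) * (g x - g c) := by
      refine mono_int c x (g x) (g x - g c) hac hcx hxb ?_
      intro t ht
      have := gmono c t hac ht.1 (ht.2.trans hxb)
      linarith
    have u3 : (∫ t in x..d, (g x - g t)) ≤ (d - x) * 0 := by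
      refine mono_int x d (g x) 0 hax hxd (by linarith) ?_
      intro t ht
      have := gmono x t hax ht.1 (ht.2.trans hdb)
      linarith
    have u4 : (∫ t in d..b, (g b - g t)) ≤ (b - d) * (g b - g d) := by
      refine mono_int d b (g b) (g b - g d) (by linarith) hdb le_rfl ?_
      intro t ht
      have := gmono d t (by linarith) ht.1 ht.2
      linarith
    have hbd : b - d = h * (b-a)/2 := by rw [hd]; ring
    have e2 : (x - c) * (g x - g c) ≤ M * (g x - g c) := by
      have h1 : 0 ≤ g x - g c := by linarith
      linarith [mul_le_mul_of_nonneg_right hM2 h1]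
    have e4 : (b - d) * (g b - g d) ≤ M * (g b - g d) := by
      have h1 : 0 ≤ g b - g d := by linarith
      have h2 : b - d ≤ M := by rw [hbd]; exact hM1
      linarith [mul_le_mul_of_nonneg_right h2 h1]
    have hle : g x - g c + (g b - g d) ≤ g b - g a := by linarith
    have final : M * (g x - g c) + M * (g b - g d) ≤ M * (g b - g a) := by
      have h2 := mul_le_mul_of_nonneg_left hle hM0
      linarith [mul_add M (g x - g c) (g b - g d)]
    linarith
end

section
/- Let f : [a,b] → ℝ be (l,L)-Lipschitzian, and let a = x₀ < x₁ < ⋯ < xₙ = b be a partition with hᵢ = x_{i+1} - xᵢ and points ξᵢ ∈ [xᵢ, x_{i+1}]. Then |∫ₐᵇ f(t)dt - [(1/2)∑ᵢ f(ξᵢ)hᵢ + (1/2)∑ᵢ ((f(xᵢ)+f(x_{i+1}))/2)hᵢ - ((L+l)/4)∑ᵢ(ξᵢ - (xᵢ+x_{i+1})/2)hᵢ]| ≤ ∑ᵢ (1/2)[hᵢ²/8 + (ξᵢ - (xᵢ+x_{i+1})/2)²](L - l). -/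
/-!
Subtracting the linear function `(L + l) / 2 * t` turns `f` into a `(L - l) / 2`-Lipschitz
function `g`, and turns the corrected error on each cell `[u, v]` into the plain error of the rule
`(v - u) / 2 * g ξ + (v - u) / 4 * (g u + g v)`. Cutting the cell at its quarter points, this rule
integrates exactly the step function equal to `g u`, `g ξ`, `g v` on the three pieces, and
`|g t - g c| ≤ K * |t - c|` bounds the error on a piece `[α, β]` by `K * ((α - c)² + (β - c)²) / 2`.
Adding the three pieces gives `K * ((v - u)² / 8 + (ξ - (u + v) / 2)²)`.
-/

open MeasureTheory intervalIntegral Set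
open scoped NNReal

theorem integral_abs_from_zero (x : ℝ) : ∫ t in (0 : ℝ)..x, |t| = x * |x| / 2 := by
  rcases le_total 0 x with hx | hx
  · rw [integral_congr (f := fun t => |t|) (g := fun t => t)
        fun t ht => abs_of_nonneg (uIcc_of_le hx ▸ ht).1, integral_id, abs_of_nonneg hx]
    ring
  · rw [integral_congr (f := fun t => |t|) (g := fun t => -t)
        fun t ht => abs_of_nonpos (uIcc_of_ge hx ▸ ht).2, intervalIntegral.integral_neg,
      integral_id, abs_of_nonpos hx]
    ring

theorem integral_abs_sub (c α β : ℝ) :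
    ∫ t in α..β, |t - c| = ((β - c) * |β - c| - (α - c) * |α - c|) / 2 := by
  have hint : ∀ p q : ℝ, IntervalIntegrable (fun t : ℝ => |t|) volume p q :=
    fun p q => continuous_abs.intervalIntegrable p q
  rw [integral_comp_sub_right (fun t => |t|), ← integral_interval_sub_left (hint 0 _) (hint 0 _),
    integral_abs_from_zero, integral_abs_from_zero]
  ring

theorem integral_abs_sub_le (c α β : ℝ) :
    ∫ t in α..β, |t - c| ≤ ((α - c) ^ 2 + (β - c) ^ 2) / 2 := by
  rw [integral_abs_sub]
  have hβ : (β - c) * |β - c| ≤ (β - c) ^ 2 := by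
    nlinarith [le_abs_self (β - c), abs_nonneg (β - c), sq_abs (β - c)]
  have hα : -((α - c) * |α - c|) ≤ (α - c) ^ 2 := by
    nlinarith [neg_abs_le (α - c), abs_nonneg (α - c), sq_abs (α - c)]
  linarith

theorem LipschitzOnWith.abs_integral_sub_le {g : ℝ → ℝ} {K : ℝ≥0} {s : Set ℝ}
    (hg : LipschitzOnWith K g s) {α β c : ℝ} (hαβ : α ≤ β) (hs : Icc α β ⊆ s) (hc : c ∈ s) :
    |∫ t in α..β, (g t - g c)| ≤ K * (((α - c) ^ 2 + (β - c) ^ 2) / 2) := by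
  calc |∫ t in α..β, (g t - g c)|
      ≤ ∫ t in α..β, K * |t - c| := by
        rw [← Real.norm_eq_abs]
        refine norm_integral_le_of_norm_le hαβ (ae_of_all _ fun t ht => ?_)
          ((continuous_const.mul (continuous_abs.comp (continuous_sub_right c))).intervalIntegrable
            _ _)
        simpa only [Real.dist_eq, Real.norm_eq_abs] using
          hg.dist_le_mul t (hs (Ioc_subset_Icc_self ht)) c hc
    _ ≤ K * (((α - c) ^ 2 + (β - c) ^ 2) / 2) := by
        rw [intervalIntegral.integral_const_mul]
        exact mul_le_mul_of_nonneg_left (integral_abs_sub_le c α β) K.2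

theorem LipschitzOnWith.abs_integral_sub_quadrature_le {g : ℝ → ℝ} {K : ℝ≥0} {u v c : ℝ}
    (hg : LipschitzOnWith K g (Icc u v)) (huv : u ≤ v) (hc : c ∈ Icc u v) :
    |(∫ t in u..v, g t) - ((v - u) / 2 * g c + (v - u) / 4 * (g u + g v))| ≤
      K * ((v - u) ^ 2 / 8 + (c - (u + v) / 2) ^ 2) := by
  set α := u + (v - u) / 4 with hα
  set β := v - (v - u) / 4 with hβ
  have huα : u ≤ α := by linarith
  have hαβ : α ≤ β := by linarith
  have hβv : β ≤ v := by linarith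
  have hint : ∀ p q, u ≤ p → p ≤ q → q ≤ v → IntervalIntegrable g volume p q :=
    fun p q hp hpq hq => (hg.continuousOn.mono (Icc_subset_Icc hp hq)).intervalIntegrable_of_Icc hpq
  have hpiece : ∀ p q d, u ≤ p → p ≤ q → q ≤ v →
      ∫ t in p..q, (g t - g d) = (∫ t in p..q, g t) - (q - p) * g d := fun p q d hp hpq hq => by
    rw [intervalIntegral.integral_sub (hint p q hp hpq hq) intervalIntegrable_const,
      intervalIntegral.integral_const, smul_eq_mul]
  have hsplit : (∫ t in u..v, g t) - ((v - u) / 2 * g c + (v - u) / 4 * (g u + g v)) =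
      (∫ t in u..α, (g t - g u)) + (∫ t in α..β, (g t - g c)) + ∫ t in β..v, (g t - g v) := by
    rw [hpiece u α u le_rfl huα (hαβ.trans hβv),
      hpiece α β c huα hαβ hβv, hpiece β v v (huα.trans hαβ) hβv le_rfl,
      ← integral_add_adjacent_intervals (hint u β le_rfl (huα.trans hαβ) hβv)
        (hint β v (huα.trans hαβ) hβv le_rfl),
      ← integral_add_adjacent_intervals (hint u α le_rfl huα (hαβ.trans hβv))
        (hint α β huα hαβ hβv)]
    ring
  have h₁ := hg.abs_integral_sub_le huα (Icc_subset_Icc le_rfl (hαβ.trans hβv))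
    (left_mem_Icc.2 huv)
  have h₂ := hg.abs_integral_sub_le hαβ (Icc_subset_Icc huα hβv) hc
  have h₃ := hg.abs_integral_sub_le hβv (Icc_subset_Icc (huα.trans hαβ) le_rfl)
    (right_mem_Icc.2 huv)
  rw [hsplit]
  calc _ ≤ |∫ t in u..α, (g t - g u)| + |∫ t in α..β, (g t - g c)| +
        |∫ t in β..v, (g t - g v)| := abs_add_three _ _ _
    _ ≤ _ := add_le_add (add_le_add h₁ h₂) h₃
    _ = K * ((v - u) ^ 2 / 8 + (c - (u + v) / 2) ^ 2) := by rw [hα, hβ]; ring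

theorem lipschitzOnWith_sub_mul_of_bounds {f : ℝ → ℝ} {l L u v : ℝ}
    (hf : ∀ x₁ x₂, u ≤ x₁ → x₁ ≤ x₂ → x₂ ≤ v →
      l * (x₂ - x₁) ≤ f x₂ - f x₁ ∧ f x₂ - f x₁ ≤ L * (x₂ - x₁)) :
    LipschitzOnWith (Real.toNNReal ((L - l) / 2)) (fun t => f t - (L + l) / 2 * t) (Icc u v) := by
  refine LipschitzOnWith.of_le_add_mul' _ fun x hx y hy => ?_
  rw [Real.dist_eq]
  rcases le_total x y with hxy | hyx
  · have := (hf x y hx.1 hxy hy.2).1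
    rw [abs_of_nonpos (sub_nonpos.2 hxy)]
    linarith
  · have := (hf y x hy.1 hyx hx.2).2
    rw [abs_of_nonneg (sub_nonneg.2 hyx)]
    linarith

theorem continuousOn_of_bounds {f : ℝ → ℝ} {l L u v : ℝ}
    (hf : ∀ x₁ x₂, u ≤ x₁ → x₁ ≤ x₂ → x₂ ≤ v →
      l * (x₂ - x₁) ≤ f x₂ - f x₁ ∧ f x₂ - f x₁ ≤ L * (x₂ - x₁)) :
    ContinuousOn f (Icc u v) :=
  ((lipschitzOnWith_sub_mul_of_bounds hf).continuousOn.add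
    (continuous_const_mul ((L + l) / 2)).continuousOn).congr fun _ _ => (sub_add_cancel _ _).symm

theorem abs_integral_sub_quadrature_le_of_bounds {f : ℝ → ℝ} {l L u v ξ : ℝ} (hlL : l ≤ L)
    (hf : ∀ x₁ x₂, u ≤ x₁ → x₁ ≤ x₂ → x₂ ≤ v →
      l * (x₂ - x₁) ≤ f x₂ - f x₁ ∧ f x₂ - f x₁ ≤ L * (x₂ - x₁))
    (huv : u ≤ v) (hξ : ξ ∈ Icc u v) :
    |(∫ t in u..v, f t) -
        (1 / 2 * (f ξ * (v - u)) + 1 / 2 * ((f u + f v) / 2 * (v - u))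
          - (L + l) / 4 * ((ξ - (u + v) / 2) * (v - u)))| ≤
      1 / 2 * ((v - u) ^ 2 / 8 + (ξ - (u + v) / 2) ^ 2) * (L - l) := by
  have hg := lipschitzOnWith_sub_mul_of_bounds hf
  have hsplit : ∫ t in u..v, (f t - (L + l) / 2 * t) =
      (∫ t in u..v, f t) - (L + l) / 2 * ((v ^ 2 - u ^ 2) / 2) := by
    rw [intervalIntegral.integral_sub ((continuousOn_of_bounds hf).intervalIntegrable_of_Icc huv)
        ((continuous_const_mul ((L + l) / 2)).intervalIntegrable u v),
      intervalIntegral.integral_const_mul, integral_id]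
  have key := hg.abs_integral_sub_quadrature_le huv hξ
  rw [Real.coe_toNNReal _ (by linarith), hsplit] at key
  refine le_of_eq_of_le ?_ (key.trans_eq (by ring))
  congr 1
  ring

theorem monotoneOn_nat_Iic_of_le_succ {α : Type*} [Preorder α] {x : ℕ → α} {n : ℕ}
    (h : ∀ i < n, x i ≤ x (i + 1)) : MonotoneOn x (Iic n) :=
  monotoneOn_of_le_succ ordConnected_Iic fun i _ _ hi => by
    rw [Order.succ_eq_add_one] at hi ⊢
    exact h i (Nat.lt_of_succ_le hi)

theorem stmt_14_general (a b l L : ℝ) (f : ℝ → ℝ) (hlL : l < L)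
    (hf : ∀ x₁ x₂, a ≤ x₁ → x₁ ≤ x₂ → x₂ ≤ b →
      l * (x₂ - x₁) ≤ f x₂ - f x₁ ∧ f x₂ - f x₁ ≤ L * (x₂ - x₁))
    (n : ℕ) (x : ℕ → ℝ) (ξ : ℕ → ℝ)
    (hx0 : x 0 = a) (hxn : x n = b)
    (hmono : ∀ i < n, x i < x (i + 1))
    (hξ : ∀ i < n, ξ i ∈ Set.Icc (x i) (x (i + 1))) :
    |(∫ t in a..b, f t) -
        (1 / 2 * ∑ i ∈ Finset.range n, f (ξ i) * (x (i + 1) - x i)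
          + 1 / 2 * ∑ i ∈ Finset.range n, (f (x i) + f (x (i + 1))) / 2 * (x (i + 1) - x i)
          - (L + l) / 4 * ∑ i ∈ Finset.range n,
              (ξ i - (x i + x (i + 1)) / 2) * (x (i + 1) - x i))| ≤
      ∑ i ∈ Finset.range n,
        1 / 2 * ((x (i + 1) - x i) ^ 2 / 8 + (ξ i - (x i + x (i + 1)) / 2) ^ 2) * (L - l) := by
  have hx := monotoneOn_nat_Iic_of_le_succ fun i hi => (hmono i hi).le
  have hpiece : ∀ i < n, ∀ x₁ x₂, x i ≤ x₁ → x₁ ≤ x₂ → x₂ ≤ x (i + 1) →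
      l * (x₂ - x₁) ≤ f x₂ - f x₁ ∧ f x₂ - f x₁ ≤ L * (x₂ - x₁) := fun i hi x₁ x₂ h₁ h₁₂ h₂ =>
    hf x₁ x₂ (hx0 ▸ (hx (Nat.zero_le _) (mem_Iic.2 (by omega)) (Nat.zero_le _)).trans h₁) h₁₂
      (h₂.trans (hxn ▸ hx (mem_Iic.2 (by omega)) self_mem_Iic (by omega)))
  have hint : ∀ i < n, IntervalIntegrable f volume (x i) (x (i + 1)) := fun i hi =>
    (continuousOn_of_bounds (hpiece i hi)).intervalIntegrable_of_Icc (hmono i hi).le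
  rw [← hx0, ← hxn, ← sum_integral_adjacent_intervals hint, Finset.mul_sum, Finset.mul_sum,
    Finset.mul_sum, ← Finset.sum_add_distrib, ← Finset.sum_sub_distrib, ← Finset.sum_sub_distrib]
  refine (Finset.abs_sum_le_sum_abs _ _).trans (Finset.sum_le_sum fun i hi => ?_)
  have hi := Finset.mem_range.1 hi
  exact abs_integral_sub_quadrature_le_of_bounds hlL.le (hpiece i hi) (hmono i hi).le (hξ i hi)

theorem stmt_14 (a b l L : ℝ) (f : ℝ → ℝ) (hab : a < b) (hlL : l < L)
    (hf : ∀ x₁ x₂, a ≤ x₁ → x₁ ≤ x₂ → x₂ ≤ b →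
      l * (x₂ - x₁) ≤ f x₂ - f x₁ ∧ f x₂ - f x₁ ≤ L * (x₂ - x₁))
    (hint : IntervalIntegrable f MeasureTheory.volume a b)
    (n : ℕ) (hn : 0 < n) (x : ℕ → ℝ) (ξ : ℕ → ℝ)
    (hx0 : x 0 = a) (hxn : x n = b)
    (hmono : ∀ i < n, x i < x (i + 1))
    (hξ : ∀ i < n, ξ i ∈ Set.Icc (x i) (x (i + 1))) :
    |(∫ t in a..b, f t) -
        (1 / 2 * ∑ i ∈ Finset.range n, f (ξ i) * (x (i + 1) - x i)
          + 1 / 2 * ∑ i ∈ Finset.range n, (f (x i) + f (x (i + 1))) / 2 * (x (i + 1) - x i)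
          - (L + l) / 4 * ∑ i ∈ Finset.range n,
              (ξ i - (x i + x (i + 1)) / 2) * (x (i + 1) - x i))| ≤
      ∑ i ∈ Finset.range n,
        1 / 2 * ((x (i + 1) - x i) ^ 2 / 8 + (ξ i - (x i + x (i + 1)) / 2) ^ 2) * (L - l) :=
  stmt_14_general a b l L f hlL hf n x ξ hx0 hxn hmono hξ
end

section
/- Let f : [a,b] → ℝ be (l,L)-Lipschitzian, a = x₀ < ⋯ < xₙ = b a partition with hᵢ = x_{i+1} - xᵢ, ξᵢ ∈ [xᵢ, x_{i+1}], and Sᵢ = (f(x_{i+1}) - f(xᵢ))/hᵢ. Then |∫ₐᵇ f(t)dt - [(1/2)∑ᵢ f(ξᵢ)hᵢ + (1/2)∑ᵢ ((f(xᵢ)+f(x_{i+1}))/2)hᵢ - (l/2)∑ᵢ(ξᵢ - (xᵢ+x_{i+1})/2)hᵢ]| ≤ ∑ᵢ hᵢ[hᵢ/4 + |ξᵢ - (xᵢ+x_{i+1})/2|](Sᵢ - l). -/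
/-!
Subtracting the line `l * t` turns `f` into a function `g` that is nondecreasing on `[a, b]`.
On a cell `[c, d]` with `h = d - c` and midpoint `m`, the rule `½ f(ξ) h + ¼ (f c + f d) h`
misses the integral of the line by `-(l / 2) (ξ - m) h`, so the corrected error for `f` equals
the plain error for `g`. For nondecreasing `g` and `c ≤ ξ ≤ d`, the integrals over `[c, ξ]` and
`[ξ, d]` are squeezed between the values of `g` at their endpoints, which confines that error
to `(h / 4 + |ξ - m|) (g d - g c)`. Summing over the cells gives the theorem, since
`h (S - l) = g d - g c`.
-/

open intervalIntegral MeasureTheory Set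

theorem MonotoneOn.intervalIntegral_mem_Icc {g : ℝ → ℝ} {c d : ℝ} (hcd : c ≤ d)
    (hg : MonotoneOn g (Icc c d)) :
    ∫ t in c..d, g t ∈ Icc (g c * (d - c)) (g d * (d - c)) := by
  have hint : IntervalIntegrable g volume c d :=
    MonotoneOn.intervalIntegrable (by rwa [uIcc_of_le hcd])
  have hc : c ∈ Icc c d := left_mem_Icc.2 hcd
  have hd : d ∈ Icc c d := right_mem_Icc.2 hcd
  constructor
  · simpa [mul_comm] using
      integral_mono_on hcd intervalIntegrable_const hint fun t ht => hg hc ht ht.1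
  · simpa [mul_comm] using
      integral_mono_on hcd hint intervalIntegrable_const fun t ht => hg ht hd ht.2

theorem MonotoneOn.abs_intervalIntegral_sub_quadrature_le {g : ℝ → ℝ} {c d ξ : ℝ}
    (hξ : ξ ∈ Icc c d) (hg : MonotoneOn g (Icc c d)) :
    |(∫ t in c..d, g t) - (1 / 2 * g ξ * (d - c) + 1 / 4 * (g c + g d) * (d - c))| ≤
      ((d - c) / 4 + |ξ - (c + d) / 2|) * (g d - g c) := by
  obtain ⟨hcξ, hξd⟩ := hξ
  have hgl : MonotoneOn g (Icc c ξ) := hg.mono (Icc_subset_Icc le_rfl hξd)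
  have hgr : MonotoneOn g (Icc ξ d) := hg.mono (Icc_subset_Icc hcξ le_rfl)
  obtain ⟨hl₁, hl₂⟩ := hgl.intervalIntegral_mem_Icc hcξ
  obtain ⟨hr₁, hr₂⟩ := hgr.intervalIntegral_mem_Icc hξd
  have hsplit : (∫ t in c..ξ, g t) + (∫ t in ξ..d, g t) = ∫ t in c..d, g t :=
    integral_add_adjacent_intervals
      (MonotoneOn.intervalIntegrable (by rwa [uIcc_of_le hcξ]))
      (MonotoneOn.intervalIntegrable (by rwa [uIcc_of_le hξd]))
  have hcd := hcξ.trans hξd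
  have h₁ : g c ≤ g ξ := hg (left_mem_Icc.2 hcd) ⟨hcξ, hξd⟩ hcξ
  have h₂ : g ξ ≤ g d := hg ⟨hcξ, hξd⟩ (right_mem_Icc.2 hcd) hξd
  rw [← hsplit, abs_le]
  rcases le_total ξ ((c + d) / 2) with hm | hm
  · rw [abs_of_nonpos (by linarith)]
    constructor <;> nlinarith [mul_nonneg (sub_nonneg.2 h₁) (sub_nonneg.2 hm),
      mul_nonneg (sub_nonneg.2 h₂) (sub_nonneg.2 hm)]
  · rw [abs_of_nonneg (by linarith)]
    constructor <;> nlinarith [mul_nonneg (sub_nonneg.2 h₁) (sub_nonneg.2 hm),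
      mul_nonneg (sub_nonneg.2 h₂) (sub_nonneg.2 hm)]

theorem monotoneOn_sub_mul_of_mul_sub_le {f : ℝ → ℝ} {s : Set ℝ} {l : ℝ}
    (hf : ∀ x₁ ∈ s, ∀ x₂ ∈ s, x₁ ≤ x₂ → l * (x₂ - x₁) ≤ f x₂ - f x₁) :
    MonotoneOn (fun t => f t - l * t) s := fun u hu v hv huv => by
  have := hf u hu v hv huv
  dsimp only
  linarith

theorem intervalIntegrable_of_monotoneOn_sub_mul {f : ℝ → ℝ} {c d l : ℝ} (hcd : c ≤ d)
    (hg : MonotoneOn (fun t => f t - l * t) (Icc c d)) : IntervalIntegrable f volume c d := by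
  have hline : IntervalIntegrable (fun t => l * t) volume c d :=
    (continuous_const.mul continuous_id).intervalIntegrable _ _
  convert (MonotoneOn.intervalIntegrable (by rwa [uIcc_of_le hcd])).add hline using 1
  simp

theorem abs_intervalIntegral_sub_quadrature_le {f : ℝ → ℝ} {c d ξ l : ℝ} (hcd : c < d)
    (hξ : ξ ∈ Icc c d) (hg : MonotoneOn (fun t => f t - l * t) (Icc c d)) :
    |(∫ t in c..d, f t) -
        (1 / 2 * (f ξ * (d - c)) + 1 / 2 * ((f c + f d) / 2 * (d - c))
          - l / 2 * ((ξ - (c + d) / 2) * (d - c)))| ≤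
      (d - c) * ((d - c) / 4 + |ξ - (c + d) / 2|) * ((f d - f c) / (d - c) - l) := by
  have hline : IntervalIntegrable (fun t => l * t) volume c d :=
    (continuous_const.mul continuous_id).intervalIntegrable _ _
  have hintegral : (∫ t in c..d, f t) = (∫ t in c..d, f t - l * t) + l * ((d ^ 2 - c ^ 2) / 2) := by
    rw [← integral_id, ← intervalIntegral.integral_const_mul, ← integral_add _ hline]
    · simp
    · exact (intervalIntegrable_of_monotoneOn_sub_mul hcd.le hg).sub hline
  have hrhs : (d - c) * ((d - c) / 4 + |ξ - (c + d) / 2|) * ((f d - f c) / (d - c) - l) =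
      ((d - c) / 4 + |ξ - (c + d) / 2|) * ((f d - l * d) - (f c - l * c)) := by
    field_simp [sub_ne_zero.2 hcd.ne']
    ring
  rw [hrhs, hintegral]
  convert hg.abs_intervalIntegral_sub_quadrature_le hξ using 2
  ring

theorem stmt_15_general (a b l L : ℝ) (f : ℝ → ℝ)
    (hf : ∀ x₁ x₂, a ≤ x₁ → x₁ ≤ x₂ → x₂ ≤ b →
      l * (x₂ - x₁) ≤ f x₂ - f x₁ ∧ f x₂ - f x₁ ≤ L * (x₂ - x₁))
    (n : ℕ) (x : ℕ → ℝ) (ξ : ℕ → ℝ)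
    (hx0 : x 0 = a) (hxn : x n = b)
    (hmono : ∀ i < n, x i < x (i + 1))
    (hξ : ∀ i < n, ξ i ∈ Set.Icc (x i) (x (i + 1))) :
    |(∫ t in a..b, f t) -
        (1 / 2 * ∑ i ∈ Finset.range n, f (ξ i) * (x (i + 1) - x i)
          + 1 / 2 * ∑ i ∈ Finset.range n, (f (x i) + f (x (i + 1))) / 2 * (x (i + 1) - x i)
          - l / 2 * ∑ i ∈ Finset.range n,
              (ξ i - (x i + x (i + 1)) / 2) * (x (i + 1) - x i))| ≤
      ∑ i ∈ Finset.range n,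
        (x (i + 1) - x i) * ((x (i + 1) - x i) / 4 + |ξ i - (x i + x (i + 1)) / 2|)
          * ((f (x (i + 1)) - f (x i)) / (x (i + 1) - x i) - l) := by
  have hg : MonotoneOn (fun t => f t - l * t) (Icc a b) :=
    monotoneOn_sub_mul_of_mul_sub_le fun x₁ h₁ x₂ h₂ h₁₂ => (hf x₁ x₂ h₁.1 h₁₂ h₂.2).1
  have hx : StrictMonoOn x (Iic n) := strictMonoOn_Iic_of_lt_succ hmono
  have hcell : ∀ i < n, MonotoneOn (fun t => f t - l * t) (Icc (x i) (x (i + 1))) := fun i hi =>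
    hg.mono <| Icc_subset_Icc
      (hx0 ▸ hx.monotoneOn (Nat.zero_le n) (mem_Iic.2 hi.le) (Nat.zero_le i))
      (hxn ▸ hx.monotoneOn (mem_Iic.2 hi) (mem_Iic.2 le_rfl) hi)
  have hsplit : (∫ t in a..b, f t) = ∑ i ∈ Finset.range n, ∫ t in x i..x (i + 1), f t := by
    rw [← hx0, ← hxn, sum_integral_adjacent_intervals fun i hi =>
      intervalIntegrable_of_monotoneOn_sub_mul (hmono i hi).le (hcell i hi)]
  rw [hsplit, Finset.mul_sum, Finset.mul_sum, Finset.mul_sum, ← Finset.sum_add_distrib,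
    ← Finset.sum_sub_distrib, ← Finset.sum_sub_distrib]
  refine (Finset.abs_sum_le_sum_abs _ _).trans (Finset.sum_le_sum fun i hi => ?_)
  rw [Finset.mem_range] at hi
  exact abs_intervalIntegral_sub_quadrature_le (hmono i hi) (hξ i hi) (hcell i hi)

theorem stmt_15 (a b l L : ℝ) (f : ℝ → ℝ) (hab : a < b) (hlL : l < L)
    (hf : ∀ x₁ x₂, a ≤ x₁ → x₁ ≤ x₂ → x₂ ≤ b →
      l * (x₂ - x₁) ≤ f x₂ - f x₁ ∧ f x₂ - f x₁ ≤ L * (x₂ - x₁))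
    (hint : IntervalIntegrable f MeasureTheory.volume a b)
    (n : ℕ) (hn : 0 < n) (x : ℕ → ℝ) (ξ : ℕ → ℝ)
    (hx0 : x 0 = a) (hxn : x n = b)
    (hmono : ∀ i < n, x i < x (i + 1))
    (hξ : ∀ i < n, ξ i ∈ Set.Icc (x i) (x (i + 1))) :
    |(∫ t in a..b, f t) -
        (1 / 2 * ∑ i ∈ Finset.range n, f (ξ i) * (x (i + 1) - x i)
          + 1 / 2 * ∑ i ∈ Finset.range n, (f (x i) + f (x (i + 1))) / 2 * (x (i + 1) - x i)
          - l / 2 * ∑ i ∈ Finset.range n,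
              (ξ i - (x i + x (i + 1)) / 2) * (x (i + 1) - x i))| ≤
      ∑ i ∈ Finset.range n,
        (x (i + 1) - x i) * ((x (i + 1) - x i) / 4 + |ξ i - (x i + x (i + 1)) / 2|)
          * ((f (x (i + 1)) - f (x i)) / (x (i + 1) - x i) - l) :=
  stmt_15_general a b l L f hf n x ξ hx0 hxn hmono hξ
end

section
/- Let X be a random variable with probability density f : [a,b] → ℝ₊ satisfying 0 ≤ m ≤ f(t) ≤ M for all t ∈ [a,b], cumulative distribution function F(x) = ∫ₐˣ f(t)dt, and expectation E(X) = ∫ₐᵇ t f(t)dt. Then for all h ∈ [0,1] and all x with a + h(b-a)/2 ≤ x ≤ b - h(b-a)/2, |(b-a){[F(x) - ((M+m)/2)(x - (a+b)/2)](1-h) + h/2} - (b - E(X))| ≤ (1/2)[((b-a)²/4)(h² + (h-1)²) + (x - (a+b)/2)²](M - m). -/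
/-!
With `K = (M + m) / 2`, `c₁ = a + h(b - a)/2` and `c₂ = b - h(b - a)/2`, the quantity inside the
absolute value equals the Peano-kernel sum `∫ₐˣ (t - c₁)(f t - K) dt + ∫ₓᵇ (t - c₂)(f t - K) dt`,
as one sees by expanding the kernels and using `∫ₐᵇ f = 1`. Since `|f - K| ≤ (M - m)/2`, each piece is
bounded by `(M - m)/2` times `∫ |t - cᵢ| dt`, an explicit sum of two squares. The hypotheses on
`x` say exactly that `a ≤ c₁ ≤ x ≤ c₂ ≤ b`.
-/

open intervalIntegral
open MeasureTheory (volume)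

theorem integral_abs_sub_of_mem_Icc {p q c : ℝ} (hpc : p ≤ c) (hcq : c ≤ q) :
    ∫ t in p..q, |t - c| = ((c - p) ^ 2 + (q - c) ^ 2) / 2 := by
  have hcont : Continuous fun t : ℝ => |t - c| := by fun_prop
  rw [← integral_add_adjacent_intervals (hcont.intervalIntegrable p c)
    (hcont.intervalIntegrable c q)]
  have hleft : ∫ t in p..c, |t - c| = ∫ t in p..c, (c - t) := by
    refine integral_congr fun t ht => ?_
    rw [Set.uIcc_of_le hpc] at ht
    simp only [abs_of_nonpos (sub_nonpos.2 ht.2), neg_sub]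
  have hright : ∫ t in c..q, |t - c| = ∫ t in c..q, (t - c) := by
    refine integral_congr fun t ht => ?_
    rw [Set.uIcc_of_le hcq] at ht
    exact abs_of_nonneg (sub_nonneg.2 ht.1)
  rw [hleft, hright, integral_sub intervalIntegrable_const intervalIntegrable_id,
    integral_sub intervalIntegrable_id intervalIntegrable_const, integral_const, integral_const,
    integral_id, integral_id, smul_eq_mul, smul_eq_mul]
  ring

theorem abs_integral_sub_mul_sub_le {f : ℝ → ℝ} {p q c K δ : ℝ} (hpc : p ≤ c)
    (hcq : c ≤ q) (hf : ∀ t ∈ Set.Icc p q, |f t - K| ≤ δ) :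
    |∫ t in p..q, (t - c) * (f t - K)| ≤ ((c - p) ^ 2 + (q - c) ^ 2) / 2 * δ := by
  have hpq : p ≤ q := hpc.trans hcq
  have hle : ∀ᵐ t, t ∈ Set.Ioc p q → ‖(t - c) * (f t - K)‖ ≤ |t - c| * δ :=
    Filter.Eventually.of_forall fun t ht => by
      rw [Real.norm_eq_abs, abs_mul]
      exact mul_le_mul_of_nonneg_left (hf t (Set.Ioc_subset_Icc_self ht)) (abs_nonneg _)
  calc |∫ t in p..q, (t - c) * (f t - K)|
      ≤ ∫ t in p..q, |t - c| * δ :=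
        norm_integral_le_of_norm_le hpq hle ((by fun_prop : Continuous fun t : ℝ =>
          |t - c| * δ).intervalIntegrable p q)
    _ = ((c - p) ^ 2 + (q - c) ^ 2) / 2 * δ := by
        rw [integral_mul_const, integral_abs_sub_of_mem_Icc hpc hcq]

theorem IntervalIntegrable.id_mul {f : ℝ → ℝ} {p q : ℝ}
    (hf : IntervalIntegrable f volume p q) :
    IntervalIntegrable (fun t => t * f t) volume p q :=
  hf.continuousOn_mul continuous_id.continuousOn

theorem integral_sub_mul_sub {f : ℝ → ℝ} {p q : ℝ}
    (hf : IntervalIntegrable f volume p q) (c K : ℝ) :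
    ∫ t in p..q, (t - c) * (f t - K) =
      (∫ t in p..q, t * f t) - c * (∫ t in p..q, f t)
        - K * ((q ^ 2 - p ^ 2) / 2 - c * (q - p)) := by
  have htf := hf.id_mul
  have hexpand : ∀ t, (t - c) * (f t - K) = (t * f t - c * f t) - (K * t - K * c) := fun t => by
    ring
  simp only [hexpand]
  rw [integral_sub (htf.sub (hf.const_mul c))
      ((intervalIntegrable_id.const_mul K).sub intervalIntegrable_const),
    integral_sub htf (hf.const_mul c),
    integral_sub (intervalIntegrable_id.const_mul K) intervalIntegrable_const,
    integral_const_mul, integral_const_mul, integral_const, integral_id, smul_eq_mul]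
  ring

theorem peano_kernel_identity {f : ℝ → ℝ} {a b x : ℝ}
    (hax : IntervalIntegrable f volume a x)
    (hxb : IntervalIntegrable f volume x b) (hprob : ∫ t in a..b, f t = 1) (K h : ℝ) :
    (b - a) * (((∫ t in a..x, f t) - K * (x - (a + b) / 2)) * (1 - h) + h / 2)
        - (b - ∫ t in a..b, t * f t) =
      (∫ t in a..x, (t - (a + h * (b - a) / 2)) * (f t - K))
        + ∫ t in x..b, (t - (b - h * (b - a) / 2)) * (f t - K) := by
  rw [integral_sub_mul_sub hax, integral_sub_mul_sub hxb,
    ← integral_add_adjacent_intervals hax.id_mul hxb.id_mul]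
  rw [← integral_add_adjacent_intervals hax hxb] at hprob
  linear_combination (b - h * (b - a) / 2) * hprob

theorem stmt_16_general (a b m M : ℝ) (f : ℝ → ℝ) (hab : a < b)
    (hbound : ∀ t ∈ Set.Icc a b, m ≤ f t ∧ f t ≤ M)
    (hint : IntervalIntegrable f MeasureTheory.volume a b)
    (hprob : (∫ t in a..b, f t) = 1)
    (F : ℝ → ℝ) (hF : ∀ x, F x = ∫ t in a..x, f t)
    (E : ℝ) (hE : E = ∫ t in a..b, t * f t)
    (h x : ℝ) (hh : h ∈ Set.Icc (0:ℝ) 1)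
    (hx1 : a + h * (b - a) / 2 ≤ x) (hx2 : x ≤ b - h * (b - a) / 2) :
    |(b - a) * ((F x - (M + m) / 2 * (x - (a + b) / 2)) * (1 - h) + h / 2) - (b - E)| ≤
      1 / 2 * ((b - a) ^ 2 / 4 * (h ^ 2 + (h - 1) ^ 2) + (x - (a + b) / 2) ^ 2) * (M - m) := by
  have hshift : 0 ≤ h * (b - a) / 2 := by have := hh.1; have := hab.le; positivity
  have hax : a ≤ x := by linarith
  have hxb : x ≤ b := by linarith
  have hf_near : ∀ t ∈ Set.Icc a b, |f t - (M + m) / 2| ≤ (M - m) / 2 := fun t ht => by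
    obtain ⟨hmt, htM⟩ := hbound t ht
    exact abs_sub_le_iff.2 ⟨by linarith, by linarith⟩
  rw [hF, hE, peano_kernel_identity
    (hint.mono_set (Set.uIcc_subset_uIcc_left (Set.mem_uIcc_of_le hax hxb)))
    (hint.mono_set (Set.uIcc_subset_uIcc_right (Set.mem_uIcc_of_le hax hxb))) hprob]
  have hleft := abs_integral_sub_mul_sub_le (by linarith) hx1
    fun t ht => hf_near t ⟨ht.1, ht.2.trans hxb⟩
  have hright := abs_integral_sub_mul_sub_le hx2 (by linarith)
    fun t ht => hf_near t ⟨hax.trans ht.1, ht.2⟩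
  calc _ ≤ _ := abs_add_le _ _
    _ ≤ _ := add_le_add hleft hright
    _ = _ := by ring

theorem stmt_16 (a b m M : ℝ) (f : ℝ → ℝ) (hab : a < b) (hmM : m < M) (hm : 0 ≤ m)
    (hbound : ∀ t ∈ Set.Icc a b, m ≤ f t ∧ f t ≤ M)
    (hint : IntervalIntegrable f MeasureTheory.volume a b)
    (hprob : (∫ t in a..b, f t) = 1)
    (F : ℝ → ℝ) (hF : ∀ x, F x = ∫ t in a..x, f t)
    (E : ℝ) (hE : E = ∫ t in a..b, t * f t)
    (h x : ℝ) (hh : h ∈ Set.Icc (0:ℝ) 1)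
    (hx1 : a + h * (b - a) / 2 ≤ x) (hx2 : x ≤ b - h * (b - a) / 2) :
    |(b - a) * ((F x - (M + m) / 2 * (x - (a + b) / 2)) * (1 - h) + h / 2) - (b - E)| ≤
      1 / 2 * ((b - a) ^ 2 / 4 * (h ^ 2 + (h - 1) ^ 2) + (x - (a + b) / 2) ^ 2) * (M - m) :=
  stmt_16_general a b m M f hab hbound hint hprob F hF E hE h x hh hx1 hx2
end

section
/- Let f : [a,b] → ℝ be a probability density with 0 ≤ m ≤ f(t) ≤ M on [a,b], F(x) = ∫ₐˣ f(t)dt, and E(X) = ∫ₐᵇ t f(t)dt. Then |(1/2)F((a+b)/2) + 1/4 - (b - E(X))/(b-a)| ≤ ((b-a)/16)(M - m). -/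
/-!
Split `[a, b]` at `c = (a + b) / 2`. Since `∫ f = 1`, the quantity inside the absolute value,
multiplied by `b - a`, equals `∑ ∫ (t - p) f(t) dt` over the two halves, `p` being the midpoint of
the half. The kernel `t - p` has mean zero on each half, so `f` may be replaced by
`f - (m + M) / 2`, which is bounded by `(M - m) / 2`; as `∫ |t - p| dt = ℓ² / 4` on a half of
length `ℓ = (b - a) / 2`, each half contributes at most `(M - m)(b - a)² / 32`.
-/

open MeasureTheory intervalIntegral Set

lemma integral_abs_sub_midpoint {u v : ℝ} (huv : u ≤ v) :
    ∫ t in u..v, |t - (u + v) / 2| = (v - u) ^ 2 / 4 := by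
  rw [integral_comp_sub_right (fun x => |x|),
    ← integral_add_adjacent_intervals (b := 0) (continuous_abs.intervalIntegrable _ _)
      (continuous_abs.intervalIntegrable _ _),
    integral_congr (g := fun x => -x) fun x hx => abs_of_nonpos ?_,
    integral_congr (g := fun x => x) fun x hx => abs_of_nonneg ?_]
  · rw [intervalIntegral.integral_neg (f := fun x => x), integral_id, integral_id]
    ring
  · rw [uIcc_of_le (by linarith)] at hx
    exact hx.1
  · rw [uIcc_of_le (by linarith)] at hx
    exact hx.2

lemma integral_sub_midpoint {u v : ℝ} : ∫ t in u..v, (t - (u + v) / 2) = 0 := by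
  simp only [integral_sub intervalIntegrable_id intervalIntegrable_const, integral_id,
    intervalIntegral.integral_const, smul_eq_mul]
  ring

lemma integral_sub_mul {f : ℝ → ℝ} {u v : ℝ} (hf : IntervalIntegrable f volume u v) (p : ℝ) :
    ∫ t in u..v, (t - p) * f t = (∫ t in u..v, t * f t) - p * ∫ t in u..v, f t := by
  simp_rw [sub_mul]
  rw [integral_sub (hf.continuousOn_mul continuous_id'.continuousOn) (hf.const_mul p),
    intervalIntegral.integral_const_mul]

lemma abs_integral_sub_midpoint_mul_le {f : ℝ → ℝ} {u v m M : ℝ} (huv : u ≤ v)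
    (hf : IntervalIntegrable f volume u v) (hbound : ∀ t ∈ Icc u v, m ≤ f t ∧ f t ≤ M) :
    |∫ t in u..v, (t - (u + v) / 2) * f t| ≤ (M - m) * (v - u) ^ 2 / 8 := by
  have hcont : Continuous fun t : ℝ => t - (u + v) / 2 := by fun_prop
  have hg : IntervalIntegrable (fun t => (t - (u + v) / 2) * (f t - (m + M) / 2)) volume u v :=
    (hf.sub intervalIntegrable_const).continuousOn_mul hcont.continuousOn
  have hcentre : ∫ t in u..v, (t - (u + v) / 2) * f t
      = ∫ t in u..v, (t - (u + v) / 2) * (f t - (m + M) / 2) := by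
    simp_rw [mul_sub]
    rw [integral_sub (hf.continuousOn_mul hcont.continuousOn)
        ((hcont.intervalIntegrable _ _).mul_const _),
      intervalIntegral.integral_mul_const, integral_sub_midpoint, zero_mul, sub_zero]
  calc |∫ t in u..v, (t - (u + v) / 2) * f t|
      ≤ ∫ t in u..v, |(t - (u + v) / 2) * (f t - (m + M) / 2)| := by
        rw [hcentre]; exact abs_integral_le_integral_abs huv
    _ ≤ ∫ t in u..v, |t - (u + v) / 2| * ((M - m) / 2) := by
        refine integral_mono_on huv hg.abs ((hcont.abs.intervalIntegrable _ _).mul_const _) ?_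
        intro t ht
        rw [abs_mul]
        refine mul_le_mul_of_nonneg_left (abs_le.2 ⟨?_, ?_⟩) (abs_nonneg _) <;>
          linarith [hbound t ht]
    _ = (M - m) * (v - u) ^ 2 / 8 := by
        rw [intervalIntegral.integral_mul_const, integral_abs_sub_midpoint huv]
        ring

lemma half_cdf_midpoint_sub_eq {f : ℝ → ℝ} {a b : ℝ} (hab : a < b)
    (hf : IntervalIntegrable f volume a b) (hprob : ∫ t in a..b, f t = 1) :
    1 / 2 * (∫ t in a..(a + b) / 2, f t) + 1 / 4 - (b - ∫ t in a..b, t * f t) / (b - a)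
      = ((∫ t in a..(a + b) / 2, (t - (a + (a + b) / 2) / 2) * f t)
        + ∫ t in (a + b) / 2..b, (t - ((a + b) / 2 + b) / 2) * f t) / (b - a) := by
  have hc : (a + b) / 2 ∈ uIcc a b := mem_uIcc_of_le (by linarith) (by linarith)
  set c := (a + b) / 2
  have hf₁ : IntervalIntegrable f volume a c := hf.mono_set (uIcc_subset_uIcc_left hc)
  have hf₂ : IntervalIntegrable f volume c b := hf.mono_set (uIcc_subset_uIcc_right hc)
  have hmass : ∫ t in c..b, f t = 1 - ∫ t in a..c, f t := by
    rw [← hprob, ← integral_add_adjacent_intervals hf₁ hf₂]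
    ring
  have hmean := integral_add_adjacent_intervals (hf₁.continuousOn_mul continuous_id'.continuousOn)
    (hf₂.continuousOn_mul continuous_id'.continuousOn)
  rw [integral_sub_mul hf₁, integral_sub_mul hf₂, ← hmean, hmass]
  have hba : b - a ≠ 0 := by linarith
  field_simp
  ring

theorem stmt_17_general (a b m M : ℝ) (f : ℝ → ℝ) (hab : a < b)
    (hbound : ∀ t ∈ Set.Icc a b, m ≤ f t ∧ f t ≤ M)
    (hint : IntervalIntegrable f MeasureTheory.volume a b)
    (hprob : (∫ t in a..b, f t) = 1)
    (F : ℝ → ℝ) (hF : ∀ x, F x = ∫ t in a..x, f t)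
    (E : ℝ) (hE : E = ∫ t in a..b, t * f t) :
    |1 / 2 * F ((a + b) / 2) + 1 / 4 - (b - E) / (b - a)| ≤ (b - a) / 16 * (M - m) := by
  have hba : 0 < b - a := by linarith
  have hc : (a + b) / 2 ∈ Icc a b := ⟨by linarith, by linarith⟩
  have h₁ := abs_integral_sub_midpoint_mul_le hc.1
    (hint.mono_set (uIcc_subset_uIcc_left (Icc_subset_uIcc hc)))
    fun t ht => hbound t ⟨ht.1, ht.2.trans hc.2⟩
  have h₂ := abs_integral_sub_midpoint_mul_le hc.2
    (hint.mono_set (uIcc_subset_uIcc_right (Icc_subset_uIcc hc)))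
    fun t ht => hbound t ⟨hc.1.trans ht.1, ht.2⟩
  rw [hF, hE, half_cdf_midpoint_sub_eq hab hint hprob, abs_div, abs_of_pos hba, div_le_iff₀ hba]
  calc _ ≤ _ := abs_add_le _ _
    _ ≤ _ := add_le_add h₁ h₂
    _ = (b - a) / 16 * (M - m) * (b - a) := by ring

theorem stmt_17 (a b m M : ℝ) (f : ℝ → ℝ) (hab : a < b) (hmM : m < M) (hm : 0 ≤ m)
    (hbound : ∀ t ∈ Set.Icc a b, m ≤ f t ∧ f t ≤ M)
    (hint : IntervalIntegrable f MeasureTheory.volume a b)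
    (hprob : (∫ t in a..b, f t) = 1)
    (F : ℝ → ℝ) (hF : ∀ x, F x = ∫ t in a..x, f t)
    (E : ℝ) (hE : E = ∫ t in a..b, t * f t) :
    |1 / 2 * F ((a + b) / 2) + 1 / 4 - (b - E) / (b - a)| ≤ (b - a) / 16 * (M - m) :=
  stmt_17_general a b m M f hab hbound hint hprob F hF E hE
end

section
/- Let f : [a,b] → ℝ be a probability density with 0 ≤ m ≤ f(t) ≤ M on [a,b] and E(X) = ∫ₐᵇ t f(t)dt. Then |E(X) - (a+3b)/4 + (1/8)(M+m)(b-a)²| ≤ (3/16)(b-a)²(M - m). -/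
theorem stmt_18 (a b m M : ℝ) (f : ℝ → ℝ) (hab : a < b) (hmM : m < M) (hm : 0 ≤ m)
    (hbound : ∀ t ∈ Set.Icc a b, m ≤ f t ∧ f t ≤ M)
    (hint : IntervalIntegrable f MeasureTheory.volume a b)
    (hprob : (∫ t in a..b, f t) = 1)
    (E : ℝ) (hE : E = ∫ t in a..b, t * f t) :
    |E - (a + 3 * b) / 4 + 1 / 8 * (M + m) * (b - a) ^ 2| ≤
      3 / 16 * (b - a) ^ 2 * (M - m) := by
  set c : ℝ := (a + 3 * b) / 4 with hc
  set K : ℝ := (M + m) / 2 with hK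
  have hac : a ≤ c := by rw [hc]; nlinarith
  have hcb : c ≤ b := by rw [hc]; nlinarith
  have hab' : a ≤ b := le_of_lt hab
  -- integrability facts
  have htf : IntervalIntegrable (fun t => t * f t) MeasureTheory.volume a b :=
    hint.continuousOn_mul continuous_id.continuousOn
  have hg : IntervalIntegrable (fun t => (t - c) * (f t - K)) MeasureTheory.volume a b :=
    (hint.sub intervalIntegrable_const).continuousOn_mul
      (continuous_id.sub continuous_const).continuousOn
  have hcf : IntervalIntegrable (fun t => c * f t) MeasureTheory.volume a b :=
    hint.const_mul c
  have hid : ∀ u v : ℝ, IntervalIntegrable (fun t : ℝ => t) MeasureTheory.volume u v := by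
    intro u v; apply Continuous.intervalIntegrable; continuity
  have hKt : IntervalIntegrable (fun t : ℝ => K * t) MeasureTheory.volume a b := by
    apply Continuous.intervalIntegrable; continuity
  have hlin : IntervalIntegrable (fun t : ℝ => K * t - K * c) MeasureTheory.volume a b := by
    apply Continuous.intervalIntegrable; continuity
  -- key identity
  have key : (∫ t in a..b, (t - c) * (f t - K)) =
      E - c + 1 / 8 * (M + m) * (b - a) ^ 2 := by
    have hfun : (fun t => (t - c) * (f t - K)) =
        fun t => (t * f t - c * f t) - (K * t - K * c) := by
      funext t; ring
    rw [hfun, intervalIntegral.integral_sub (htf.sub hcf) hlin,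
      intervalIntegral.integral_sub htf hcf]
    have h1 : (∫ t in a..b, c * f t) = c := by
      rw [intervalIntegral.integral_const_mul, hprob, mul_one]
    have h2 : (∫ t in a..b, (K * t - K * c)) = K * ((b ^ 2 - a ^ 2) / 2) - K * c * (b - a) := by
      rw [intervalIntegral.integral_sub hKt (intervalIntegrable_const),
        intervalIntegral.integral_const_mul, integral_id,
        intervalIntegral.integral_const, smul_eq_mul]
      ring
    rw [h1, h2, ← hE, hK, hc]
    ring
  -- pointwise bound
  have hpt : ∀ t ∈ Set.Icc a b, |(t - c) * (f t - K)| ≤ (M - m) / 2 * |t - c| := by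
    intro t ht
    rw [abs_mul, mul_comm]
    apply mul_le_mul_of_nonneg_right _ (abs_nonneg _)
    rw [abs_le]
    obtain ⟨h1, h2⟩ := hbound t ht
    constructor <;> [skip; skip] <;> rw [hK] <;> nlinarith
  -- integral of |t - c|
  have habs : (∫ t in a..b, |t - c|) = 5 * (b - a) ^ 2 / 16 := by
    have hi1 : IntervalIntegrable (fun t : ℝ => |t - c|) MeasureTheory.volume a c :=
      ((continuous_id.sub continuous_const).abs).intervalIntegrable a c
    have hi2 : IntervalIntegrable (fun t : ℝ => |t - c|) MeasureTheory.volume c b :=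
      ((continuous_id.sub continuous_const).abs).intervalIntegrable c b
    rw [← intervalIntegral.integral_add_adjacent_intervals hi1 hi2]
    have e1 : (∫ t in a..c, |t - c|) = ∫ t in a..c, (c - t) := by
      apply intervalIntegral.integral_congr
      intro t ht
      rw [Set.uIcc_of_le hac] at ht
      show |t - c| = c - t
      rw [abs_of_nonpos (by linarith [ht.2])]
      ring
    have e2 : (∫ t in c..b, |t - c|) = ∫ t in c..b, (t - c) := by
      apply intervalIntegral.integral_congr
      intro t ht
      rw [Set.uIcc_of_le hcb] at ht
      show |t - c| = t - c
      exact abs_of_nonneg (by linarith [ht.1])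
    rw [e1, e2,
      intervalIntegral.integral_sub intervalIntegrable_const (hid a c),
      intervalIntegral.integral_sub (hid c b) intervalIntegrable_const,
      integral_id, integral_id,
      intervalIntegral.integral_const, intervalIntegral.integral_const,
      smul_eq_mul, smul_eq_mul, hc]
    ring
  -- main estimate
  have hmono : (∫ t in a..b, |(t - c) * (f t - K)|) ≤
      ∫ t in a..b, (M - m) / 2 * |t - c| := by
    apply intervalIntegral.integral_mono_on hab' hg.abs
      ((continuous_const.mul (continuous_id.sub continuous_const).abs).intervalIntegrable a b)
      hpt
  have hbound2 : |∫ t in a..b, (t - c) * (f t - K)| ≤ 5 / 32 * (b - a) ^ 2 * (M - m) := by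
    calc |∫ t in a..b, (t - c) * (f t - K)|
        ≤ ∫ t in a..b, |(t - c) * (f t - K)| :=
          intervalIntegral.abs_integral_le_integral_abs hab'
      _ ≤ ∫ t in a..b, (M - m) / 2 * |t - c| := hmono
      _ = (M - m) / 2 * (5 * (b - a) ^ 2 / 16) := by
          rw [intervalIntegral.integral_const_mul, habs]
      _ = 5 / 32 * (b - a) ^ 2 * (M - m) := by ring
  rw [← key]
  have hX : (0:ℝ) ≤ (b - a) ^ 2 * (M - m) :=
    mul_nonneg (sq_nonneg _) (sub_nonneg.mpr hmM.le)
  linarith [hbound2]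
end
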